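/- arXiv:2411.00650 — 8 statements merged into one kernel-verified Lean document; each statement's English description precedes it below -/
import Mathlib

section
/- Let f : ℝ → ℂ be Lipschitz continuous with compact support, and suppose its Fourier transform f̂(ω) := ∫_ℝ e^{−iωy} f(y) dy satisfies a decay bound |f̂(ω)| ≤ K·|ω|^{−α} for all |ω| ≥ 1, for some constants K ≥ 0 and α > 1. Then for every x ∈ ℝ one has ∑_{j∈ℤ} e^{−i j x} (∫_ℝ f(y+j)·conj(f′(y)) dy) = −i·∑_{j∈ℤ} (x+2jπ)·|f̂(x+2jπ)|², where f′ denotes the almost-everywhere derivative of f, and both series converge absolutely. -/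
open MeasureTheory

/-- Fourier transform with the convention `f̂(ω) = ∫ℝ e^{-iωy} f(y) dy`. -/
noncomputable def fourierT (f : ℝ → ℂ) (ω : ℝ) : ℂ :=
  ∫ y : ℝ, Complex.exp (-(Complex.I * ω * y)) * f y

open Filter Asymptotics Topology Pointwise
open scoped FourierTransform

section aux
variable {f : ℝ → ℂ} {L : NNReal}

lemma norm_deriv_le_lip (hLip : LipschitzWith L f) (y : ℝ) : ‖deriv f y‖ ≤ L := by
  by_cases h : DifferentiableAt ℝ f y
  · rw [← fderiv_apply_one_eq_deriv]
    calc ‖fderiv ℝ f y 1‖ ≤ ‖fderiv ℝ f y‖ * ‖(1:ℝ)‖ := (fderiv ℝ f y).le_opNorm 1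
    _ ≤ L := by simpa using norm_fderiv_le_of_lipschitz ℝ hLip
  · simp [deriv_zero_of_not_differentiableAt h]

lemma integrable_deriv_lip (hLip : LipschitzWith L f) (hsupp : HasCompactSupport f) :
    Integrable (deriv f) := by
  have hm : AEStronglyMeasurable (deriv f) (volume : Measure ℝ) :=
    (measurable_deriv f).aestronglyMeasurable
  have hK : IsCompact (tsupport (deriv f)) := hsupp.deriv
  have : Integrable ((tsupport (deriv f)).indicator (deriv f)) := by
    rw [integrable_indicator_iff hK.measurableSet]
    exact Measure.integrableOn_of_bounded hK.measure_lt_top.ne hm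
      (ae_of_all _ fun y => norm_deriv_le_lip hLip y)
  refine this.congr (Eventually.of_forall fun y => ?_)
  exact congrFun (Set.indicator_eq_self.2 (subset_tsupport _)) y

lemma integrable_shift_mul (hLip : LipschitzWith L f) (hsupp : HasCompactSupport f)
    (e : ℝ → ℂ) (he : Continuous e) (h : ℝ) :
    Integrable (fun y : ℝ => e y * f (y + h)) := by
  have hcs : HasCompactSupport fun y : ℝ => f (y + h) :=
    hsupp.comp_homeomorph (Homeomorph.addRight h)
  exact (he.mul (hLip.continuous.comp (continuous_id.add continuous_const))).integrable_of_hasCompactSupport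
    hcs.mul_left

lemma ibp_lip (hLip : LipschitzWith L f) (hsupp : HasCompactSupport f) (ω : ℝ) :
    (∫ y : ℝ, Complex.exp (-(Complex.I * ω * y)) * deriv f y)
      = Complex.I * ω * fourierT f ω := by
  set e : ℝ → ℂ := fun y => Complex.exp (-(Complex.I * ω * y)) with he_def
  have he : Continuous e := by
    exact Complex.continuous_exp.comp
      (((continuous_const.mul Complex.continuous_ofReal)).neg)
  set hn : ℕ → ℝ := fun n => ((n : ℝ) + 1)⁻¹ with hn_def
  have hnpos : ∀ n, 0 < hn n := fun n => by positivity
  have hnle : ∀ n, hn n ≤ 1 := fun n => by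
    rw [hn_def]
    rw [inv_le_one_iff₀]; right; linarith [Nat.cast_nonneg (α := ℝ) n]
  have hn0 : Tendsto hn atTop (𝓝 0) := by
    simpa [hn_def, one_div] using tendsto_one_div_add_atTop_nhds_zero_nat (𝕜 := ℝ)
  have hn0' : Tendsto hn atTop (𝓝[≠] 0) :=
    tendsto_nhdsWithin_of_tendsto_nhds_of_eventually_within _ hn0
      (Eventually.of_forall fun n => (hnpos n).ne')
  have hseq : ∀ y : ℝ, Tendsto (fun n => y + hn n) atTop (𝓝[≠] y) := by
    intro y
    apply tendsto_nhdsWithin_of_tendsto_nhds_of_eventually_within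
    · simpa using tendsto_const_nhds.add hn0
    · exact Eventually.of_forall fun n => by
        simp [(hnpos n).ne']
  set F : ℕ → ℝ → ℂ := fun n y => e y * ((hn n)⁻¹ • (f (y + hn n) - f y)) with hF_def
  -- Step A: dominated convergence
  have tendA : Tendsto (fun n => ∫ y : ℝ, F n y) atTop
      (𝓝 (∫ y : ℝ, e y * deriv f y)) := by
    apply tendsto_integral_of_dominated_convergence
      ((Metric.cthickening 1 (tsupport f)).indicator fun _ => (L : ℝ))
    · intro n
      exact (he.mul ((((hLip.continuous.comp (continuous_id.add (continuous_const (y := hn n)))).sub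
        hLip.continuous)).const_smul (hn n)⁻¹)).aestronglyMeasurable
    · rw [integrable_indicator_iff (Metric.isClosed_cthickening.measurableSet)]
      refine integrableOn_const (hs := ne_of_lt ?_)
      exact (hsupp.cthickening).measure_lt_top
    · intro n
      refine ae_of_all _ fun y => ?_
      by_cases hy : y ∈ Metric.cthickening 1 (tsupport f)
      · rw [Set.indicator_of_mem hy]
        have h1 : ‖e y‖ = 1 := by
          simp [he_def, Complex.norm_exp]
        rw [hF_def]
        simp only [norm_mul, h1, one_mul, norm_smul, norm_inv, Real.norm_eq_abs,
          abs_of_pos (hnpos n)]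
        have hd : ‖f (y + hn n) - f y‖ ≤ (L : ℝ) * hn n := by
          have := hLip.dist_le_mul (y + hn n) y
          simpa [dist_eq_norm, abs_of_pos (hnpos n)] using this
        calc (hn n)⁻¹ * ‖f (y + hn n) - f y‖ ≤ (hn n)⁻¹ * ((L : ℝ) * hn n) := by
              gcongr
          _ = (L : ℝ) := by field_simp [(hnpos n).ne']
      · rw [Set.indicator_of_notMem hy]
        have hy1 : y ∉ tsupport f := fun h =>
          hy (Metric.self_subset_cthickening _ h)
        have hy2 : y + hn n ∉ tsupport f := by
          intro h
          exact hy (Metric.mem_cthickening_of_dist_le y (y + hn n) 1 _ h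
            (by rw [dist_comm]; simpa [dist_eq_norm, abs_of_pos (hnpos n)] using hnle n))
        simp [hF_def, image_eq_zero_of_notMem_tsupport hy1,
          image_eq_zero_of_notMem_tsupport hy2]
    · filter_upwards [hLip.ae_differentiableAt] with y hy
      have h1 : Tendsto (fun n => slope f y (y + hn n)) atTop (𝓝 (deriv f y)) :=
        (hasDerivAt_iff_tendsto_slope.1 hy.hasDerivAt).comp (hseq y)
      have h2 : ∀ n, slope f y (y + hn n) = (hn n)⁻¹ • (f (y + hn n) - f y) := by
        intro n
        rw [slope_def_module, add_sub_cancel_left]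
      simp only [hF_def]
      refine Tendsto.const_mul (e y) ?_
      simpa only [funext h2] using h1
  -- Step B : evaluate the integrals
  set φ : ℝ → ℂ := fun h => Complex.exp (Complex.I * ω * h) with hφ_def
  have stepB : ∀ n, (∫ y : ℝ, F n y) = slope φ 0 (hn n) * fourierT f ω := by
    intro n
    set h := hn n with hh
    have int1 : Integrable (fun y : ℝ => e y * f (y + h)) :=
      integrable_shift_mul hLip hsupp e he h
    have int2 : Integrable (fun y : ℝ => e y * f y) := by
      simpa using integrable_shift_mul hLip hsupp e he 0
    have e1 : (∫ y : ℝ, F n y) = (h : ℝ)⁻¹ •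
        ((∫ y : ℝ, e y * f (y + h)) - ∫ y : ℝ, e y * f y) := by
      rw [← integral_sub int1 int2, ← integral_smul]
      congr 1 with y
      simp only [hF_def, mul_sub, smul_sub, mul_smul_comm]
      rfl
    have e2 : (∫ y : ℝ, e y * f (y + h)) = Complex.exp (Complex.I * ω * h) * fourierT f ω := by
      have key : ∀ y : ℝ, Complex.exp (-(Complex.I * ω * ((y : ℝ) - h))) * f y
          = Complex.exp (Complex.I * ω * h) * (Complex.exp (-(Complex.I * ω * y)) * f y) := by
        intro y
        rw [← mul_assoc, ← Complex.exp_add]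
        congr 2
        push_cast
        ring
      calc (∫ y : ℝ, e y * f (y + h))
          = ∫ y : ℝ, Complex.exp (-(Complex.I * ω * ((y + h : ℝ) - h))) * f (y + h) := by
            congr 1 with y
            rw [he_def]
            norm_num
        _ = ∫ y : ℝ, Complex.exp (-(Complex.I * ω * ((y : ℝ) - h))) * f y :=
            integral_add_right_eq_self (fun u : ℝ => Complex.exp (-(Complex.I * ω * ((u : ℝ) - h))) * f u) h
        _ = ∫ y : ℝ, Complex.exp (Complex.I * ω * h) * (Complex.exp (-(Complex.I * ω * y)) * f y) := by
            congr 1 with y; exact key y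
        _ = Complex.exp (Complex.I * ω * h) * fourierT f ω := by
            rw [integral_const_mul]; rfl
    have e3 : (∫ y : ℝ, e y * f y) = fourierT f ω := rfl
    rw [e1, e2, e3, slope_def_module]
    simp only [sub_zero, vsub_eq_sub, hφ_def, Complex.ofReal_zero, mul_zero,
      Complex.exp_zero, smul_mul_assoc]
    congr 1
    ring
  -- Step C : limit of step B
  have hφd : HasDerivAt φ (Complex.I * ω) 0 := by
    have h0 : HasDerivAt (fun h : ℝ => (h : ℂ)) 1 0 := by
      simpa using (hasDerivAt_id (0 : ℝ)).ofReal_comp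
    have hm : HasDerivAt (fun h : ℝ => Complex.I * ω * (h : ℂ)) (Complex.I * ω) 0 := by
      simpa using h0.const_mul (Complex.I * ω)
    have := hm.cexp
    simpa [hφ_def] using this
  have tendB : Tendsto (fun n => slope φ 0 (hn n) * fourierT f ω) atTop
      (𝓝 (Complex.I * ω * fourierT f ω)) :=
    ((hasDerivAt_iff_tendsto_slope.1 hφd).comp hn0').mul_const _
  rw [funext stepB] at tendA
  exact tendsto_nhds_unique tendA tendB

noncomputable def cCorr (f : ℝ → ℂ) (t : ℝ) : ℂ :=
  ∫ y : ℝ, f (y + t) * (starRingEnd ℂ) (deriv f y)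

lemma conj_deriv_integrable (hLip : LipschitzWith L f) (hsupp : HasCompactSupport f) :
    Integrable (fun y : ℝ => (starRingEnd ℂ) (deriv f y)) :=
  (integrable_deriv_lip hLip hsupp).mono
    ((continuous_star.measurable.comp (measurable_deriv f)).aestronglyMeasurable)
    (ae_of_all _ fun y => by simp [RCLike.norm_conj])

lemma cCorr_hasCompactSupport (hsupp : HasCompactSupport f) :
    HasCompactSupport (cCorr f) := by
  have hS : IsCompact (tsupport f - tsupport f) := by
    have h2 : tsupport f - tsupport f
        = (fun p : ℝ × ℝ => p.1 - p.2) '' ((tsupport f) ×ˢ (tsupport f)) := by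
      rw [Set.image_prod]
      exact Set.image2_sub.symm
    rw [h2]
    exact (hsupp.prod hsupp).image (continuous_fst.sub continuous_snd)
  apply HasCompactSupport.intro hS
  intro t ht
  have h0 : ∀ y : ℝ, f (y + t) * (starRingEnd ℂ) (deriv f y) = 0 := by
    intro y
    by_cases hd : deriv f y = 0
    · simp [hd]
    · by_cases hf0 : f (y + t) = 0
      · simp [hf0]
      · exfalso
        apply ht
        have hy1 : y + t ∈ tsupport f := subset_tsupport _ hf0
        have hy2 : y ∈ tsupport f := support_deriv_subset hd
        have : t = (y + t) - y := by ring
        rw [this]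
        exact Set.sub_mem_sub hy1 hy2
  simp only [cCorr, h0, integral_zero]

lemma cCorr_continuous (hLip : LipschitzWith L f) (hsupp : HasCompactSupport f) :
    Continuous (cCorr f) := by
  obtain ⟨M, hM⟩ := hLip.continuous.bounded_above_of_compact_support hsupp
  apply continuous_of_dominated (bound := fun y : ℝ => M * ‖deriv f y‖)
  · intro t
    exact ((hLip.continuous.comp (continuous_id.add continuous_const)).aestronglyMeasurable).mul
      ((continuous_star.measurable.comp (measurable_deriv f)).aestronglyMeasurable)
  · intro t
    refine ae_of_all _ fun y => ?_
    rw [norm_mul, RCLike.norm_conj]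
    gcongr
    exact hM _
  · exact (integrable_deriv_lip hLip hsupp).norm.const_mul M
  · exact ae_of_all _ fun y =>
      ((hLip.continuous.comp (continuous_const.add continuous_id)).mul continuous_const)

lemma fourierT_cCorr (hLip : LipschitzWith L f) (hsupp : HasCompactSupport f) (ω : ℝ) :
    fourierT (cCorr f) ω = -(Complex.I * ω) * ((‖fourierT f ω‖ ^ 2 : ℝ) : ℂ) := by
  have he : Continuous fun y : ℝ => Complex.exp (-(Complex.I * ω * y)) :=
    Complex.continuous_exp.comp ((continuous_const.mul Complex.continuous_ofReal).neg)
  set d : ℝ → ℂ := fun y => (starRingEnd ℂ) (deriv f y) with hd_def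
  have hdmeas : Measurable d := continuous_star.measurable.comp (measurable_deriv f)
  set φ : ℝ → ℝ → ℂ := fun t y => Complex.exp (-(Complex.I * ω * t)) * (f (y + t) * d y)
    with hφ_def
  have hmeas : AEStronglyMeasurable (Function.uncurry φ) ((volume : Measure ℝ).prod volume) := by
    apply Measurable.aestronglyMeasurable
    exact ((he.comp continuous_fst).measurable).mul
      (((hLip.continuous.comp (continuous_snd.add continuous_fst)).measurable).mul
        (hdmeas.comp measurable_snd))
  have hnormφ : ∀ t y : ℝ, ‖φ t y‖ = ‖f (t + y)‖ * ‖d y‖ := by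
    intro t y
    simp only [hφ_def, norm_mul, Complex.norm_exp]
    rw [add_comm y t]
    simp
  have hint : Integrable (Function.uncurry φ) ((volume : Measure ℝ).prod volume) := by
    rw [integrable_prod_iff' hmeas]
    constructor
    · refine ae_of_all _ fun y => ?_
      have h1 : Integrable fun t : ℝ => (Complex.exp (-(Complex.I * ω * t)) * f (t + y)) * d y :=
        (integrable_shift_mul hLip hsupp _ he y).mul_const (d y)
      refine h1.congr (ae_of_all _ fun t => ?_)
      simp only [Function.uncurry_apply_pair, hφ_def]
      rw [add_comm y t]
      ring
    · have h2 : Integrable fun y : ℝ => (∫ u : ℝ, ‖f u‖) * ‖deriv f y‖ :=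
        ((integrable_deriv_lip hLip hsupp).norm.const_mul _)
      refine h2.congr (ae_of_all _ fun y => ?_)
      show (∫ u : ℝ, ‖f u‖) * ‖deriv f y‖ = ∫ t : ℝ, ‖Function.uncurry φ (t, y)‖
      simp only [Function.uncurry_apply_pair]
      rw [show (∫ t : ℝ, ‖φ t y‖) = ∫ t : ℝ, ‖f (t + y)‖ * ‖d y‖ from by
        congr 1 with t; exact hnormφ t y]
      rw [integral_mul_const, integral_add_right_eq_self (fun u : ℝ => ‖f u‖) y]
      simp only [hd_def, RCLike.norm_conj]
  have step1 : fourierT (cCorr f) ω = ∫ t : ℝ, ∫ y : ℝ, φ t y := by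
    rw [fourierT]
    congr 1 with t
    rw [cCorr, ← integral_const_mul]
  have step2 : (∫ t : ℝ, ∫ y : ℝ, φ t y) = ∫ y : ℝ, ∫ t : ℝ, φ t y :=
    integral_integral_swap hint
  have step3 : ∀ y : ℝ, (∫ t : ℝ, φ t y)
      = d y * (Complex.exp (Complex.I * ω * y) * fourierT f ω) := by
    intro y
    have key : ∀ t : ℝ, φ t y
        = (fun u : ℝ => Complex.exp (-(Complex.I * ω * ((u : ℝ) - y))) * f u * d y) (t + y) := by
      intro t
      simp only [hφ_def]
      rw [add_comm y t]
      norm_num [mul_assoc]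
    calc (∫ t : ℝ, φ t y)
        = ∫ t : ℝ, (fun u : ℝ => Complex.exp (-(Complex.I * ω * ((u : ℝ) - y))) * f u * d y)
            (t + y) := by congr 1 with t; exact key t
      _ = ∫ u : ℝ, Complex.exp (-(Complex.I * ω * ((u : ℝ) - y))) * f u * d y :=
          integral_add_right_eq_self
            (fun u : ℝ => Complex.exp (-(Complex.I * ω * ((u : ℝ) - y))) * f u * d y) y
      _ = ∫ u : ℝ, (Complex.exp (Complex.I * ω * y) * (Complex.exp (-(Complex.I * ω * u)) * f u))
            * d y := by
          congr 1 with u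
          rw [← mul_assoc, ← Complex.exp_add]
          congr 2
          push_cast
          ring
      _ = (Complex.exp (Complex.I * ω * y) * fourierT f ω) * d y := by
          rw [integral_mul_const, integral_const_mul]; rfl
      _ = d y * (Complex.exp (Complex.I * ω * y) * fourierT f ω) := by ring
  have step4 : (∫ y : ℝ, ∫ t : ℝ, φ t y)
      = (∫ y : ℝ, d y * Complex.exp (Complex.I * ω * y)) * fourierT f ω := by
    rw [← integral_mul_const]
    congr 1 with y
    rw [step3 y]
    ring
  have step5 : (∫ y : ℝ, d y * Complex.exp (Complex.I * ω * y))
      = (starRingEnd ℂ) (Complex.I * ω * fourierT f ω) := by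
    rw [← ibp_lip hLip hsupp ω, ← integral_conj]
    congr 1 with y
    rw [map_mul, ← Complex.exp_conj]
    simp only [hd_def, map_neg, map_mul, Complex.conj_I, Complex.conj_ofReal]
    ring
  rw [step1, step2, step4, step5]
  have hc : (starRingEnd ℂ) (Complex.I * ω * fourierT f ω)
      = -(Complex.I * ω) * (starRingEnd ℂ) (fourierT f ω) := by
    simp only [map_mul, Complex.conj_I, Complex.conj_ofReal]
    ring
  rw [hc, mul_assoc]
  congr 1
  rw [mul_comm, Complex.mul_conj, Complex.normSq_eq_norm_sq]

end aux

/-- Poisson-summation-type Lemma 3.8: for `f : ℝ → ℂ` Lipschitz with compact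
support whose Fourier transform decays like `|ω|^{-α}` with `α > 1`, for every
`x ∈ ℝ` both series below converge absolutely and
`∑_{j∈ℤ} e^{-ijx} ∫ f(y+j)·conj(f'(y)) dy = -i ∑_{j∈ℤ} (x+2jπ)|f̂(x+2jπ)|²`. -/
theorem poisson_summation_type (f : ℝ → ℂ) (L : NNReal) (hLip : LipschitzWith L f)
    (hsupp : HasCompactSupport f) (K α : ℝ) (hK : 0 ≤ K) (hα : 1 < α)
    (hdecay : ∀ ω : ℝ, 1 ≤ |ω| → ‖fourierT f ω‖ ≤ K * |ω| ^ (-α)) (x : ℝ) :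
    (Summable fun j : ℤ =>
      ‖Complex.exp (-(Complex.I * (j : ℂ) * (x : ℂ))) *
        ∫ y : ℝ, f (y + (j : ℝ)) * (starRingEnd ℂ) (deriv f y)‖) ∧
    (Summable fun j : ℤ =>
      |x + 2 * (j : ℝ) * Real.pi| * ‖fourierT f (x + 2 * (j : ℝ) * Real.pi)‖ ^ 2) ∧
    (∑' j : ℤ, Complex.exp (-(Complex.I * (j : ℂ) * (x : ℂ))) *
        ∫ y : ℝ, f (y + (j : ℝ)) * (starRingEnd ℂ) (deriv f y))
      = -Complex.I *
        ∑' j : ℤ, (((x + 2 * (j : ℝ) * Real.pi) *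
          ‖fourierT f (x + 2 * (j : ℝ) * Real.pi)‖ ^ 2 : ℝ) : ℂ) := by
  classical
  set c := cCorr f with hc_def
  have hc_cont : Continuous c := cCorr_continuous hLip hsupp
  have hc_supp : HasCompactSupport c := cCorr_hasCompactSupport hsupp
  set H : ℝ → ℂ := fun t => Complex.exp (-(Complex.I * t * x)) * c t with hH_def
  have hH_cont : Continuous H :=
    (Complex.continuous_exp.comp
      (((continuous_const.mul Complex.continuous_ofReal).mul continuous_const).neg)).mul hc_cont
  have hH_supp : HasCompactSupport H := hc_supp.mul_left
  have hb : (1 : ℝ) < 2 * α - 1 := by linarith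
  -- Fourier transform of H
  have h𝓕H : ∀ ξ : ℝ, 𝓕 H ξ = fourierT c (x + 2 * ξ * Real.pi) := by
    intro ξ
    rw [Real.fourier_real_eq_integral_exp_smul, fourierT]
    congr 1 with t
    rw [smul_eq_mul]
    simp only [hH_def]
    rw [← mul_assoc, ← Complex.exp_add]
    congr 2
    push_cast
    ring
  have h𝓕H_val : ∀ ξ : ℝ, 𝓕 H ξ = -(Complex.I * ((x + 2 * ξ * Real.pi : ℝ) : ℂ)) *
      ((‖fourierT f (x + 2 * ξ * Real.pi)‖ ^ 2 : ℝ) : ℂ) := fun ξ => by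
    rw [h𝓕H ξ, hc_def, fourierT_cCorr hLip hsupp]
  have h𝓕H_norm : ∀ ξ : ℝ, ‖𝓕 H ξ‖
      = |x + 2 * ξ * Real.pi| * ‖fourierT f (x + 2 * ξ * Real.pi)‖ ^ 2 := by
    intro ξ
    rw [h𝓕H_val ξ, norm_mul, norm_neg, norm_mul, Complex.norm_I, one_mul,
      Complex.norm_real, Complex.norm_real, Real.norm_eq_abs, Real.norm_eq_abs,
      abs_of_nonneg (pow_nonneg (norm_nonneg (fourierT f (x + 2 * ξ * Real.pi))) 2)]
  -- decay of 𝓕 H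
  have hdecayH : (𝓕 H) =O[Filter.cocompact ℝ] (|·| ^ (-(2 * α - 1))) := by
    rw [isBigO_iff]
    refine ⟨K ^ 2, ?_⟩
    have hev : ∀ᶠ ξ : ℝ in Filter.cocompact ℝ, |x| + 1 ≤ ‖ξ‖ :=
      tendsto_norm_cocompact_atTop.eventually_ge_atTop _
    filter_upwards [hev] with ξ hξ
    rw [Real.norm_eq_abs] at hξ
    set ω' := x + 2 * ξ * Real.pi with hω'
    have hξ1 : (1 : ℝ) ≤ |ξ| := by linarith [abs_nonneg x]
    have hπ : (3 : ℝ) < Real.pi := Real.pi_gt_three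
    have hω'ξ : |ξ| ≤ |ω'| := by
      have h1 : |2 * ξ * Real.pi| = 2 * Real.pi * |ξ| := by
        rw [abs_mul, abs_mul, abs_of_pos Real.pi_pos, abs_of_pos (by norm_num : (0:ℝ) < 2)]
        ring
      have h2 : 2 * Real.pi * |ξ| ≤ |ω'| + |x| := by
        have he : ω' + -x = 2 * ξ * Real.pi := by rw [hω']; ring
        calc 2 * Real.pi * |ξ| = |2 * ξ * Real.pi| := h1.symm
          _ = |ω' + -x| := by rw [he]
          _ ≤ |ω'| + |(-x)| := abs_add_le _ _
          _ = |ω'| + |x| := by rw [abs_neg]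
      nlinarith [abs_nonneg ξ, abs_nonneg x]
    have hω'1 : (1 : ℝ) ≤ |ω'| := hξ1.trans hω'ξ
    have hω'pos : (0 : ℝ) < |ω'| := lt_of_lt_of_le zero_lt_one hω'1
    rw [h𝓕H_norm ξ]
    have hf1 : ‖fourierT f ω'‖ ≤ K * |ω'| ^ (-α) := hdecay ω' hω'1
    calc |ω'| * ‖fourierT f ω'‖ ^ 2 ≤ |ω'| * (K * |ω'| ^ (-α)) ^ 2 := by
          have h3 := pow_le_pow_left₀ (norm_nonneg _) hf1 2
          exact mul_le_mul_of_nonneg_left h3 (abs_nonneg _)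
      _ = K ^ 2 * (|ω'| ^ (1 : ℝ) * (|ω'| ^ (-α) * |ω'| ^ (-α))) := by
          rw [Real.rpow_one]; ring
      _ = K ^ 2 * |ω'| ^ (-(2 * α - 1)) := by
          rw [← Real.rpow_add hω'pos, ← Real.rpow_add hω'pos]
          congr 1
          ring_nf
      _ ≤ K ^ 2 * |ξ| ^ (-(2 * α - 1)) := by
          have h4 := Real.rpow_le_rpow_of_nonpos (lt_of_lt_of_le zero_lt_one hξ1) hω'ξ
            (by linarith : -(2 * α - 1) ≤ 0)
          exact mul_le_mul_of_nonneg_left h4 (sq_nonneg K)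
      _ = K ^ 2 * ‖|ξ| ^ (-(2 * α - 1))‖ := by
          rw [Real.norm_eq_abs, abs_of_nonneg (Real.rpow_nonneg (abs_nonneg ξ) _)]
  -- decay of H (compact support)
  have hHdecay : H =O[Filter.cocompact ℝ] (|·| ^ (-(2 * α - 1))) := by
    rw [isBigO_iff]
    refine ⟨1, ?_⟩
    have hmem : (tsupport H)ᶜ ∈ Filter.cocompact ℝ :=
      Filter.mem_cocompact.2 ⟨tsupport H, hH_supp, subset_rfl⟩
    filter_upwards [hmem] with ξ hξ
    rw [image_eq_zero_of_notMem_tsupport hξ]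
    simp only [norm_zero, one_mul]
    positivity
  -- summability of 𝓕 H over the integers
  have hsum𝓕 : Summable fun n : ℤ => 𝓕 H n :=
    summable_of_isBigO (Real.summable_abs_int_rpow hb)
      (hdecayH.comp_tendsto Int.tendsto_coe_cofinite)
  have S2 : Summable fun j : ℤ =>
      |x + 2 * (j : ℝ) * Real.pi| * ‖fourierT f (x + 2 * (j : ℝ) * Real.pi)‖ ^ 2 := by
    have h5 : Summable fun n : ℤ => ‖𝓕 H n‖ := summable_norm_iff.mpr hsum𝓕
    exact h5.congr fun n => h𝓕H_norm n
  -- first summability : compact support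
  have S1 : Summable fun j : ℤ =>
      ‖Complex.exp (-(Complex.I * (j : ℂ) * (x : ℂ))) *
        ∫ y : ℝ, f (y + (j : ℝ)) * (starRingEnd ℂ) (deriv f y)‖ := by
    obtain ⟨r, hr⟩ := hc_supp.isBounded.subset_closedBall (0 : ℝ)
    apply summable_of_ne_finset_zero (s := Finset.Icc (-(⌈r⌉ : ℤ)) ⌈r⌉)
    intro j hj
    have hc0 : c j = 0 := by
      apply image_eq_zero_of_notMem_tsupport
      intro hmem
      apply hj
      have habs : |(j : ℝ)| ≤ r := by
        simpa [Metric.mem_closedBall, Real.dist_eq] using hr hmem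
      rw [Finset.mem_Icc]
      constructor
      · have : -(r : ℝ) ≤ (j : ℝ) := by
          have := neg_abs_le ((j : ℝ)); linarith
        have h6 : ((-(⌈r⌉ : ℤ) : ℤ) : ℝ) ≤ (j : ℝ) := by
          push_cast
          linarith [Int.le_ceil r]
        exact_mod_cast h6
      · have h7 : ((j : ℝ)) ≤ ((⌈r⌉ : ℤ) : ℝ) :=
          le_trans (le_trans (le_abs_self _) habs) (Int.le_ceil r)
        exact_mod_cast h7
    have : (∫ y : ℝ, f (y + (j : ℝ)) * (starRingEnd ℂ) (deriv f y)) = c j := rfl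
    rw [this, hc0, mul_zero, norm_zero]
  refine ⟨S1, S2, ?_⟩
  -- the Poisson summation identity
  have poisson := Real.tsum_eq_tsum_fourier_of_rpow_decay hH_cont hb hHdecay hdecayH 0
  have hLHS : (∑' j : ℤ, Complex.exp (-(Complex.I * (j : ℂ) * (x : ℂ))) *
      ∫ y : ℝ, f (y + (j : ℝ)) * (starRingEnd ℂ) (deriv f y))
      = ∑' n : ℤ, H ((0 : ℝ) + (n : ℝ)) := by
    refine tsum_congr fun n => ?_
    have : ((0 : ℝ) + (n : ℝ)) = (n : ℝ) := by ring
    rw [this]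
    simp only [hH_def]
    norm_cast
  have hRHS : (∑' n : ℤ, 𝓕 H n * fourier n ((0 : ℝ) : UnitAddCircle))
      = -Complex.I * ∑' j : ℤ, (((x + 2 * (j : ℝ) * Real.pi) *
          ‖fourierT f (x + 2 * (j : ℝ) * Real.pi)‖ ^ 2 : ℝ) : ℂ) := by
    rw [← tsum_mul_left]
    refine tsum_congr fun n => ?_
    have hf0 : fourier n ((0 : ℝ) : UnitAddCircle) = 1 := by
      simp [fourier_coe_apply]
    rw [hf0, mul_one, h𝓕H_val (n : ℝ)]
    push_cast
    ring
  rw [hLHS, poisson, hRHS]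
end

section
/- For every integer p ≥ 1 and every θ ∈ (0,π), the absolutely convergent series satisfies ∑_{j∈ℤ} (θ+2πj)^{−(2p+1)} > 0; consequently C_p(θ) < 0 for all θ ∈ (0,π) and C_p(θ) > 0 for all θ ∈ (−π,0). -/
/-- `C_p(θ) = -(2-2cos θ)^{p+1} · ∑_{j∈ℤ} (θ+2πj)^{-(2p+1)}`. -/
noncomputable def Cp (p : ℕ) (θ : ℝ) : ℝ :=
  -(2 - 2 * Real.cos θ) ^ (p + 1) *
    ∑' j : ℤ, ((θ + 2 * Real.pi * (j : ℝ)) ^ (2 * p + 1))⁻¹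

/-!
Pair the term `j = k ≥ 0` of the series with `j = -(k + 1)`. Since `n = 2p + 1` is odd, the
pair is `(θ + 2πk)⁻ⁿ - (2π(k + 1) - θ)⁻ⁿ`, which is positive because `0 < θ + 2πk < 2π(k + 1) - θ`
exactly when `θ < π`. The factor `-(2 - 2cos θ)^{p+1}` is negative for `θ ∈ (0, π)`, and `C_p`
is odd in `θ`, which gives the sign on `(-π, 0)`.
-/

open Real

section OddPowerLatticeSum

variable {n : ℕ} {c : ℝ}

lemma summable_inv_pow_add_mul (hn : 1 < n) (hc : c ≠ 0) (θ : ℝ) :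
    Summable fun j : ℤ ↦ ((θ + c * j) ^ n)⁻¹ := by
  have hs := ((summable_one_div_int_add_rpow (θ / c) n).mpr (by exact_mod_cast hn)).mul_left
    (|c| ^ n)⁻¹
  refine .of_norm (hs.congr fun j ↦ ?_)
  have : θ + c * j = c * (j + θ / c) := by field_simp; ring
  rw [this, norm_inv, norm_pow, Real.norm_eq_abs, abs_mul, mul_pow, mul_inv, Real.rpow_natCast,
    one_div]

lemma tsum_inv_pow_neg_add_mul (hodd : Odd n) (c θ : ℝ) :
    ∑' j : ℤ, ((-θ + c * j) ^ n)⁻¹ = -∑' j : ℤ, ((θ + c * j) ^ n)⁻¹ := by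
  rw [← tsum_neg, ← (Equiv.neg ℤ).tsum_eq]
  refine tsum_congr fun j ↦ ?_
  rw [Equiv.neg_apply, Int.cast_neg, show -θ + c * -(j : ℝ) = -(θ + c * j) by ring,
    hodd.neg_pow, inv_neg]

lemma tsum_inv_pow_add_mul_pos (hn : 1 < n) (hodd : Odd n) {θ : ℝ} (hθ : 0 < θ)
    (hθc : 2 * θ < c) : 0 < ∑' j : ℤ, ((θ + c * j) ^ n)⁻¹ := by
  have hs := summable_inv_pow_add_mul hn (by linarith) θ
  have hpair (k : ℕ) : 0 < ((θ + c * (k : ℤ)) ^ n)⁻¹ + ((θ + c * (-(k + 1) : ℤ)) ^ n)⁻¹ := by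
    have hneg : θ + c * ((-(k + 1) : ℤ) : ℝ) = -(c * (k + 1) - θ) := by push_cast; ring
    have hk : (0 : ℝ) ≤ k := k.cast_nonneg
    have hbase : 0 < θ + c * k := by nlinarith
    have hlt : ((c * (k + 1) - θ) ^ n)⁻¹ < ((θ + c * k) ^ n)⁻¹ :=
      inv_strictAnti₀ (pow_pos hbase n) (pow_lt_pow_left₀ (by linarith) hbase.le (by omega))
    rw [hneg, hodd.neg_pow, inv_neg, Int.cast_natCast]
    linarith
  rw [← tsum_nat_add_neg_add_one hs]
  exact hs.nat_add_neg_add_one.tsum_pos (fun k ↦ (hpair k).le) 0 (hpair 0)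

end OddPowerLatticeSum

lemma Cp_neg (p : ℕ) (θ : ℝ) : Cp p (-θ) = -Cp p θ := by
  rw [Cp, Cp, cos_neg, tsum_inv_pow_neg_add_mul ⟨p, rfl⟩]
  ring

lemma Cp_neg_of_mem_Ioo {p : ℕ} (hp : 1 ≤ p) {θ : ℝ} (hθ : θ ∈ Set.Ioo 0 π) : Cp p θ < 0 := by
  have hcos : cos θ < 1 := by
    simpa using cos_lt_cos_of_nonneg_of_le_pi le_rfl hθ.2.le hθ.1
  refine mul_neg_of_neg_of_pos (neg_neg_of_pos (pow_pos (by linarith) _)) ?_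
  exact tsum_inv_pow_add_mul_pos (by omega) ⟨p, rfl⟩ hθ.1 (by linarith [hθ.2])

/-- For every integer `p ≥ 1` and `θ ∈ (0,π)`, the series
`∑_{j∈ℤ} (θ+2πj)^{-(2p+1)}` is positive; consequently `C_p < 0` on `(0,π)`
and `C_p > 0` on `(-π,0)`. -/
theorem series_pos_and_Cp_sign (p : ℕ) (hp : 1 ≤ p) :
    (∀ θ ∈ Set.Ioo (0 : ℝ) Real.pi,
        0 < ∑' j : ℤ, ((θ + 2 * Real.pi * (j : ℝ)) ^ (2 * p + 1))⁻¹) ∧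
    (∀ θ ∈ Set.Ioo (0 : ℝ) Real.pi, Cp p θ < 0) ∧
    (∀ θ ∈ Set.Ioo (-Real.pi) (0 : ℝ), 0 < Cp p θ) := by
  refine ⟨fun θ hθ ↦ tsum_inv_pow_add_mul_pos (by omega) ⟨p, rfl⟩ hθ.1 (by linarith [hθ.2]),
    fun θ hθ ↦ Cp_neg_of_mem_Ioo hp hθ, fun θ hθ ↦ ?_⟩
  have h := Cp_neg_of_mem_Ioo hp (θ := -θ) ⟨by linarith [hθ.2], by linarith [hθ.1]⟩
  rw [Cp_neg] at h
  linarith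
end

section
/- For every integer p ≥ 1, the quotient C_p(θ)/θ tends to −1 as θ tends to 0 through nonzero values. -/
open Topology Filter

set_option maxHeartbeats 1000000 in
/-- For every integer `p ≥ 1`, `C_p(θ)/θ → -1` as `θ → 0`, `θ ≠ 0`. -/
theorem Cp_div_theta_tendsto_neg_one (p : ℕ) (hp : 1 ≤ p) :
    Tendsto (fun θ : ℝ => Cp p θ / θ) (𝓝[≠] (0 : ℝ)) (𝓝 (-1)) := by
  have hpi : (3:ℝ) < Real.pi := Real.pi_gt_three
  set k := 2 * p + 1 with hk
  have hk1 : 1 < k := by omega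
  -- bound function
  set g : ℤ → ℝ := fun j => ((Real.pi * |(j:ℝ)|) ^ k)⁻¹ with hgdef
  have hgsum : Summable g := by
    have h1 : Summable (fun j : ℤ => |1 / (j:ℝ) ^ k|) :=
      (Real.summable_one_div_int_pow.mpr hk1).abs
    have h2 : Summable (fun j : ℤ => (Real.pi ^ k)⁻¹ * |1 / (j:ℝ) ^ k|) := h1.mul_left _
    refine h2.congr fun j => ?_
    simp only [hgdef, mul_pow, mul_inv, one_div, abs_inv, abs_pow]
    try ring
  have hg0 : ∀ j : ℤ, 0 ≤ g j := fun j => by positivity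
  -- key lower bound on |θ + 2πj|
  have key : ∀ θ : ℝ, |θ| ≤ 1 → ∀ j : ℤ, j ≠ 0 →
      Real.pi * |(j:ℝ)| ≤ |θ + 2 * Real.pi * (j:ℝ)| := by
    intro θ hθ j hj
    have hj1 : (1:ℝ) ≤ |(j:ℝ)| := by
      rw [← Int.cast_abs]; exact_mod_cast Int.one_le_abs (by simpa using hj)
    have h1 : |2 * Real.pi * (j:ℝ)| - |θ| ≤ |θ + 2 * Real.pi * (j:ℝ)| := by
      have := abs_sub_abs_le_abs_sub (2 * Real.pi * (j:ℝ)) (-θ)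
      simp only [sub_neg_eq_add] at this
      calc |2 * Real.pi * (j:ℝ)| - |θ| = |2 * Real.pi * (j:ℝ)| - |-θ| := by rw [abs_neg]
        _ ≤ |2 * Real.pi * (j:ℝ) + θ| := this
        _ = |θ + 2 * Real.pi * (j:ℝ)| := by rw [add_comm]
    have h2 : |2 * Real.pi * (j:ℝ)| = 2 * Real.pi * |(j:ℝ)| := by
      rw [abs_mul, abs_of_nonneg (by positivity : (0:ℝ) ≤ 2 * Real.pi)]
    nlinarith [hθ, hj1, h1, h2]
  -- summability of absolute values
  have habs : ∀ θ : ℝ, |θ| ≤ 1 →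
      Summable (fun j : ℤ => |((θ + 2 * Real.pi * (j:ℝ)) ^ k)⁻¹|) := by
    intro θ hθ
    refine Summable.of_norm_bounded_eventually hgsum ?_
    have hfin : {j : ℤ | ¬ ‖|((θ + 2 * Real.pi * (j:ℝ)) ^ k)⁻¹|‖ ≤ g j} ⊆ {0} := by
      intro j hj
      by_contra hj0
      apply hj
      have hj0' : j ≠ 0 := by simpa using hj0
      have hkey := key θ hθ j hj0'
      have hpos : (0:ℝ) < Real.pi * |(j:ℝ)| := by
        have : (1:ℝ) ≤ |(j:ℝ)| := by
          rw [← Int.cast_abs]; exact_mod_cast Int.one_le_abs (by simpa using hj0')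
        positivity
      rw [Real.norm_eq_abs, abs_abs, abs_inv, abs_pow]
      exact inv_anti₀ (by positivity) (pow_le_pow_left₀ hpos.le hkey k)
    exact Set.Finite.subset (Set.finite_singleton 0) hfin
  have hfs : ∀ θ : ℝ, |θ| ≤ 1 →
      Summable (fun j : ℤ => ((θ + 2 * Real.pi * (j:ℝ)) ^ k)⁻¹) := fun θ hθ =>
    (habs θ hθ).of_abs
  -- the tail sum
  set S : ℝ → ℝ := fun θ =>
    ∑' j : ℤ, if j = 0 then 0 else ((θ + 2 * Real.pi * (j:ℝ)) ^ k)⁻¹ with hSdef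
  set M : ℝ := ∑' j : ℤ, g j with hMdef
  have hM0 : 0 ≤ M := tsum_nonneg hg0
  have hSsum : ∀ θ : ℝ, |θ| ≤ 1 →
      Summable (fun j : ℤ => |if j = 0 then 0 else ((θ + 2 * Real.pi * (j:ℝ)) ^ k)⁻¹|) := by
    intro θ hθ
    refine (habs θ hθ).of_nonneg_of_le (fun j => abs_nonneg _) fun j => ?_
    split <;> simp [abs_nonneg]
  have hSle : ∀ θ : ℝ, |θ| ≤ 1 → |S θ| ≤ M := by
    intro θ hθ
    have h1 : |S θ| ≤ ∑' j : ℤ, |if j = 0 then 0 else ((θ + 2 * Real.pi * (j:ℝ)) ^ k)⁻¹| := by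
      have h := norm_tsum_le_tsum_norm
        (f := fun j : ℤ => if j = 0 then 0 else ((θ + 2 * Real.pi * (j:ℝ)) ^ k)⁻¹)
        (by simpa [Real.norm_eq_abs] using hSsum θ hθ)
      simpa [Real.norm_eq_abs] using h
    refine h1.trans (Summable.tsum_le_tsum (fun j => ?_) (hSsum θ hθ) hgsum)
    by_cases hj : j = 0
    · simp [hj, hgdef, zero_pow (by omega : k ≠ 0)]
    · have hkey := key θ hθ j hj
      have hpos : (0:ℝ) < Real.pi * |(j:ℝ)| := by
        have : (1:ℝ) ≤ |(j:ℝ)| := by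
          rw [← Int.cast_abs]; exact_mod_cast Int.one_le_abs (by simpa using hj)
        positivity
      rw [if_neg hj, abs_inv, abs_pow]
      exact inv_anti₀ (by positivity) (pow_le_pow_left₀ hpos.le hkey k)
  -- split of the tsum
  have hsplit : ∀ θ : ℝ, |θ| ≤ 1 →
      (∑' j : ℤ, ((θ + 2 * Real.pi * (j:ℝ)) ^ k)⁻¹) = (θ ^ k)⁻¹ + S θ := by
    intro θ hθ
    have := Summable.tsum_eq_add_tsum_ite (hfs θ hθ) 0
    simpa using this
  -- the comparison function
  set F : ℝ → ℝ := fun θ =>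
    -(((2 - 2 * Real.cos θ) / θ ^ 2) ^ (p + 1)) - (2 - 2 * Real.cos θ) ^ (p + 1) / θ * S θ
    with hFdef
  have hsmall : ∀ᶠ θ : ℝ in 𝓝[≠] (0:ℝ), |θ| ≤ 1 := by
    have h1 : ∀ᶠ θ : ℝ in 𝓝 (0:ℝ), |θ| ≤ 1 := by
      filter_upwards [Metric.closedBall_mem_nhds (0:ℝ) one_pos] with θ hθ
      simpa [Real.dist_eq] using hθ
    exact eventually_nhdsWithin_of_eventually_nhds h1
  have hne : ∀ᶠ θ : ℝ in 𝓝[≠] (0:ℝ), θ ≠ 0 := eventually_mem_nhdsWithin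
  have heq : ∀ᶠ θ : ℝ in 𝓝[≠] (0:ℝ), F θ = Cp p θ / θ := by
    filter_upwards [hsmall, hne] with θ hθ hθ0
    rw [Cp, hsplit θ hθ, hFdef]
    have hθ2 : θ ^ 2 ≠ 0 := pow_ne_zero _ hθ0
    rw [hk]
    simp only [div_pow]
    field_simp
    ring
  refine (Tendsto.congr' heq ?_)
  -- first term tends to -1
  have hT1 : Tendsto (fun θ : ℝ => (2 - 2 * Real.cos θ) / θ ^ 2) (𝓝[≠] (0:ℝ)) (𝓝 1) := by
    have hdiff : Tendsto (fun θ : ℝ => (2 - 2 * Real.cos θ) / θ ^ 2 - 1) (𝓝[≠] (0:ℝ)) (𝓝 0) := by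
      apply squeeze_zero_norm' (a := fun θ : ℝ => θ ^ 2 * (5 / 48))
      · filter_upwards [hsmall, hne] with θ hθ hθ0
        have hθ2 : θ ^ 2 ≠ 0 := pow_ne_zero _ hθ0
        have hb := Real.cos_bound hθ
        have h1 : |2 - 2 * Real.cos θ - θ ^ 2| ≤ |θ| ^ 4 * (5 / 48) := by
          have : 2 - 2 * Real.cos θ - θ ^ 2 = -(2 * (Real.cos θ - (1 - θ ^ 2 / 2))) := by ring
          rw [this, abs_neg, abs_mul]
          rw [abs_of_nonneg (by norm_num : (0:ℝ) ≤ 2)]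
          nlinarith [hb]
        have h2 : (2 - 2 * Real.cos θ) / θ ^ 2 - 1 = (2 - 2 * Real.cos θ - θ ^ 2) / θ ^ 2 := by
          field_simp
        rw [Real.norm_eq_abs, h2, abs_div, abs_of_nonneg (sq_nonneg θ)]
        rw [div_le_iff₀ (lt_of_le_of_ne (sq_nonneg θ) (Ne.symm hθ2))]
        calc |2 - 2 * Real.cos θ - θ ^ 2| ≤ |θ| ^ 4 * (5 / 48) := h1
          _ = θ ^ 2 * (5 / 48) * θ ^ 2 := by
              rw [show |θ| ^ 4 = θ ^ 2 * θ ^ 2 by rw [← sq_abs θ]; ring]; ring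

      · have : Tendsto (fun θ : ℝ => θ ^ 2 * (5 / 48)) (𝓝 (0:ℝ)) (𝓝 (0 ^ 2 * (5 / 48))) :=
          ((continuous_pow 2).mul continuous_const).tendsto 0
        simpa using this.mono_left nhdsWithin_le_nhds
    have := hdiff.add (tendsto_const_nhds (x := (1:ℝ)))
    simpa using this
  have hT1p : Tendsto (fun θ : ℝ => -(((2 - 2 * Real.cos θ) / θ ^ 2) ^ (p + 1)))
      (𝓝[≠] (0:ℝ)) (𝓝 (-1)) := by
    have := (hT1.pow (p + 1)).neg
    simpa using this
  -- second term tends to 0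
  have hT2 : Tendsto (fun θ : ℝ => (2 - 2 * Real.cos θ) ^ (p + 1) / θ * S θ)
      (𝓝[≠] (0:ℝ)) (𝓝 0) := by
    apply squeeze_zero_norm' (a := fun θ : ℝ => 2 ^ (p + 1) * |θ| ^ (2 * p + 1) * M)
    · filter_upwards [hsmall, hne] with θ hθ hθ0
      have hθa : (0:ℝ) < |θ| := abs_pos.mpr hθ0
      have hb := Real.cos_bound hθ
      have hA0 : 0 ≤ 2 - 2 * Real.cos θ := by nlinarith [Real.cos_le_one θ]
      have hA2 : 2 - 2 * Real.cos θ ≤ 2 * θ ^ 2 := by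
        have hsq : θ ^ 2 ≤ 1 := by nlinarith [sq_abs θ, abs_nonneg θ, hθ]
        have hθ41 : |θ| ^ 4 ≤ θ ^ 2 := by
          have h4 : |θ| ^ 4 = θ ^ 2 * θ ^ 2 := by rw [← sq_abs θ]; ring
          nlinarith [sq_nonneg θ]
        have hb' := abs_le.mp hb
        nlinarith [hb'.1, hb'.2, hθ41]
      have h1 : |(2 - 2 * Real.cos θ) ^ (p + 1) / θ| ≤ 2 ^ (p + 1) * |θ| ^ (2 * p + 1) := by
        rw [abs_div, abs_pow, abs_of_nonneg hA0]
        rw [div_le_iff₀ hθa]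
        calc (2 - 2 * Real.cos θ) ^ (p + 1) ≤ (2 * θ ^ 2) ^ (p + 1) :=
              pow_le_pow_left₀ hA0 hA2 _
          _ = 2 ^ (p + 1) * |θ| ^ (2 * p + 1) * |θ| := by
              rw [mul_pow, ← sq_abs θ, ← pow_mul,
                show 2 * (p + 1) = (2 * p + 1) + 1 by ring, pow_succ]
              ring
      rw [Real.norm_eq_abs, abs_mul]
      calc |(2 - 2 * Real.cos θ) ^ (p + 1) / θ| * |S θ|
          ≤ (2 ^ (p + 1) * |θ| ^ (2 * p + 1)) * M := by
            apply mul_le_mul h1 (hSle θ hθ) (abs_nonneg _) (by positivity)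
        _ = 2 ^ (p + 1) * |θ| ^ (2 * p + 1) * M := by ring
    · have : Tendsto (fun θ : ℝ => 2 ^ (p + 1) * |θ| ^ (2 * p + 1) * M) (𝓝 (0:ℝ))
          (𝓝 (2 ^ (p + 1) * |(0:ℝ)| ^ (2 * p + 1) * M)) := by
        exact ((continuous_const.mul ((continuous_abs).pow (2 * p + 1))).mul
          continuous_const).tendsto 0
      simpa [zero_pow (by omega : 2 * p + 1 ≠ 0)] using this.mono_left nhdsWithin_le_nhds
  have := hT1p.sub hT2
  simpa using this
end

section
/- For every integer p ≥ 1 and every θ ∈ ℝ with θ/(2π) ∉ ℤ, the function C_p is differentiable at θ with derivative C_p′(θ) = (p+1)·(sin θ/(1−cos θ))·C_p(θ) + (2p+1)·M_p(θ). -/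
/-- Summability of shifted inverse powers over `ℤ`. -/
lemma summable_shift_abs_pow (θ : ℝ) (k : ℕ) (hk : 2 ≤ k) :
    Summable fun j : ℤ => (|θ + 2 * Real.pi * (j : ℝ)| ^ k)⁻¹ := by
  have hπ := Real.pi_pos
  have hsum : Summable fun j : ℤ => (Real.pi ^ 2)⁻¹ * (((j : ℝ)) ^ 2)⁻¹ := by
    have := Real.summable_one_div_int_pow.mpr (by norm_num : 1 < 2)
    simpa only [one_div] using this.mul_left ((Real.pi ^ 2)⁻¹)
  apply Summable.of_norm_bounded_eventually hsum
  have key : ∀ j : ℤ, (|θ| + 1) / Real.pi ≤ |(j : ℝ)| →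
      ‖(|θ + 2 * Real.pi * (j : ℝ)| ^ k)⁻¹‖ ≤ (Real.pi ^ 2)⁻¹ * (((j : ℝ)) ^ 2)⁻¹ := by
    intro j hj
    have hj1 : |θ| + 1 ≤ Real.pi * |(j : ℝ)| := by rw [div_le_iff₀ hπ] at hj; linarith
    have habs2 : |2 * Real.pi * (j : ℝ)| = 2 * (Real.pi * |(j : ℝ)|) := by
      rw [abs_mul, abs_of_pos (by linarith : (0:ℝ) < 2 * Real.pi)]; ring
    have h3 : |2 * Real.pi * (j : ℝ)| - |θ| ≤ |θ + 2 * Real.pi * (j : ℝ)| := by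
      have h6 := abs_sub_abs_le_abs_sub (2 * Real.pi * (j : ℝ)) (-θ)
      simp only [abs_neg, sub_neg_eq_add] at h6
      have h7 : 2 * Real.pi * (j:ℝ) + θ = θ + 2 * Real.pi * (j:ℝ) := by ring
      rw [h7] at h6; linarith
    rw [habs2] at h3
    have h00 := abs_nonneg θ
    have h1 : (1 : ℝ) ≤ |θ + 2 * Real.pi * (j : ℝ)| := by linarith
    have hpij : Real.pi * |(j : ℝ)| ≤ |θ + 2 * Real.pi * (j : ℝ)| := by linarith
    have hx2 : Real.pi ^ 2 * ((j : ℝ)) ^ 2 ≤ |θ + 2 * Real.pi * (j : ℝ)| ^ k := by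
      calc Real.pi ^ 2 * ((j : ℝ)) ^ 2 = (Real.pi * |(j : ℝ)|) ^ 2 := by
            rw [mul_pow, sq_abs]
        _ ≤ |θ + 2 * Real.pi * (j : ℝ)| ^ 2 := pow_le_pow_left₀ (by positivity) hpij 2
        _ ≤ |θ + 2 * Real.pi * (j : ℝ)| ^ k := pow_le_pow_right₀ h1 hk
    have hjpos : (0:ℝ) < |(j : ℝ)| := lt_of_lt_of_le (by positivity) hj
    have hj2 : (0:ℝ) < ((j:ℝ)) ^ 2 := by rw [← sq_abs]; exact pow_pos hjpos 2
    rw [Real.norm_eq_abs, abs_inv, abs_pow, abs_abs, ← mul_inv]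
    exact inv_anti₀ (by positivity) hx2
  have hfin : {j : ℤ | ¬ ‖(|θ + 2 * Real.pi * (j : ℝ)| ^ k)⁻¹‖ ≤
      (Real.pi ^ 2)⁻¹ * (((j : ℝ)) ^ 2)⁻¹}.Finite := by
    apply Set.Finite.subset
      (Set.finite_Icc (-(⌈(|θ| + 1) / Real.pi⌉ + 1)) (⌈(|θ| + 1) / Real.pi⌉ + 1))
    intro j hj
    simp only [Set.mem_setOf_eq] at hj
    by_contra hmem
    apply hj
    apply key
    simp only [Set.mem_Icc, not_and_or, not_le] at hmem
    have hceil : (|θ| + 1) / Real.pi ≤ (⌈(|θ| + 1) / Real.pi⌉ : ℝ) := Int.le_ceil _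
    have hceilnn : (0:ℝ) ≤ (⌈(|θ| + 1) / Real.pi⌉ : ℝ) := by
      refine le_trans ?_ hceil; positivity
    rcases hmem with h | h
    · have hcast : (j : ℝ) < -((⌈(|θ| + 1) / Real.pi⌉ : ℝ) + 1) := by
        exact_mod_cast Int.cast_lt.mpr h
      have hjneg : (j : ℝ) < 0 := by linarith
      rw [abs_of_neg hjneg]
      linarith
    · have hcast : (⌈(|θ| + 1) / Real.pi⌉ : ℝ) + 1 < (j : ℝ) := by
        exact_mod_cast Int.cast_lt.mpr h
      have hjpos : (0:ℝ) < (j : ℝ) := by linarith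
      rw [abs_of_pos hjpos]
      linarith
  exact hfin

lemma exists_sep (θ : ℝ) (hθ : ∀ k : ℤ, θ ≠ 2 * Real.pi * (k : ℝ)) :
    ∃ ε > 0, ∀ j : ℤ, 2 * ε ≤ |θ + 2 * Real.pi * (j : ℝ)| := by
  have hπ := Real.pi_pos
  set d := θ / (2 * Real.pi) with hd
  have hθd : θ = 2 * Real.pi * d := by rw [hd]; field_simp
  refine ⟨|d - round d| / 2 * (2 * Real.pi), ?_, ?_⟩
  · have hne : d - round d ≠ 0 := by
      intro h
      exact hθ (round d) (hθd.trans (mul_eq_mul_left_iff.mpr (Or.inl (sub_eq_zero.mp h))))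
    positivity
  · intro j
    have habs : |θ + 2 * Real.pi * (j : ℝ)| = 2 * Real.pi * |d + j| := by
      rw [hθd, show 2 * Real.pi * d + 2 * Real.pi * (j:ℝ) = 2 * Real.pi * (d + j) by ring,
        abs_mul, abs_of_pos (by linarith : (0:ℝ) < 2 * Real.pi)]
    have hround : |d - round d| ≤ |d + j| := by
      rcases eq_or_ne (-j) (round d) with hcase | hcase
      · apply le_of_eq
        rw [← hcase]
        push_cast
        rw [sub_neg_eq_add]
      · have h1 : |d - (round d : ℝ)| ≤ 1 / 2 := abs_sub_round d
        have h2 : (1 : ℝ) ≤ |((-j - round d : ℤ) : ℝ)| := by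
          rw [← Int.cast_abs]
          exact_mod_cast Int.one_le_abs (sub_ne_zero.mpr hcase)
        have h3 : |((-j - round d : ℤ) : ℝ)| ≤ |d - round d| + |d + j| := by
          push_cast
          have heq : -(j:ℝ) - (round d : ℝ) = (d - round d) - (d + j) := by ring
          rw [heq]
          exact abs_sub _ _
        linarith
    rw [habs]
    nlinarith [hround, abs_nonneg (d - round d)]

/-- `M_p(θ) = (2-2cos θ)^{p+1} · ∑_{j∈ℤ} (θ+2πj)^{-(2p+2)}`. -/
noncomputable def Mp (p : ℕ) (θ : ℝ) : ℝ :=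
  (2 - 2 * Real.cos θ) ^ (p + 1) *
    ∑' j : ℤ, ((θ + 2 * Real.pi * (j : ℝ)) ^ (2 * p + 2))⁻¹

/-- For `p ≥ 1` and `θ` with `θ/(2π) ∉ ℤ`, `C_p` is differentiable at `θ` with
`C_p'(θ) = (p+1)·(sin θ/(1-cos θ))·C_p(θ) + (2p+1)·M_p(θ)`. -/
theorem hasDerivAt_Cp (p : ℕ) (hp : 1 ≤ p) (θ : ℝ)
    (hθ : ∀ k : ℤ, θ ≠ 2 * Real.pi * (k : ℝ)) :
    HasDerivAt (Cp p)
      ((p + 1 : ℝ) * (Real.sin θ / (1 - Real.cos θ)) * Cp p θ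
        + (2 * p + 1 : ℝ) * Mp p θ) θ := by
  have hπ := Real.pi_pos
  obtain ⟨ε, hεpos, hsep⟩ := exists_sep θ hθ
  have hball : ∀ y ∈ Metric.ball θ ε, ∀ j : ℤ,
      |θ + 2 * Real.pi * (j : ℝ)| / 2 ≤ |y + 2 * Real.pi * (j : ℝ)| := by
    intro y hy j
    rw [Metric.mem_ball, Real.dist_eq] at hy
    have h1 := abs_sub_abs_le_abs_sub (θ + 2 * Real.pi * (j : ℝ)) (θ - y)
    have h2 : θ + 2 * Real.pi * (j:ℝ) - (θ - y) = y + 2 * Real.pi * (j:ℝ) := by ring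
    rw [h2] at h1
    have h3 := hsep j
    have h4 : |θ - y| < ε := by rwa [abs_sub_comm]
    linarith
  have hne : ∀ y ∈ Metric.ball θ ε, ∀ j : ℤ, y + 2 * Real.pi * (j : ℝ) ≠ 0 := by
    intro y hy j h
    have h1 := hball y hy j
    rw [h, abs_zero] at h1
    have h2 := hsep j
    linarith
  -- the derivative of the series
  have hderiv : ∀ j : ℤ, ∀ y ∈ Metric.ball θ ε,
      HasDerivAt (fun z : ℝ => ((z + 2 * Real.pi * (j : ℝ)) ^ (2 * p + 1))⁻¹)
        (-(2 * (p:ℝ) + 1) * ((y + 2 * Real.pi * (j : ℝ)) ^ (2 * p + 2))⁻¹) y := by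
    intro j y hy
    have h0 := hne y hy j
    have h1 : HasDerivAt (fun z : ℝ => z + 2 * Real.pi * (j : ℝ)) 1 y :=
      (hasDerivAt_id y).add_const _
    have h2 := (h1.pow (2 * p + 1)).inv (pow_ne_zero _ h0)
    refine h2.congr_deriv ?_
    simp only [Pi.pow_apply, Nat.add_sub_cancel]
    push_cast
    field_simp
    ring
  have hbound : ∀ j : ℤ, ∀ y ∈ Metric.ball θ ε,
      ‖-(2 * (p:ℝ) + 1) * ((y + 2 * Real.pi * (j : ℝ)) ^ (2 * p + 2))⁻¹‖ ≤
        (2 * (p:ℝ) + 1) * 2 ^ (2 * p + 2) *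
          (|θ + 2 * Real.pi * (j : ℝ)| ^ (2 * p + 2))⁻¹ := by
    intro j y hy
    have h1 := hball y hy j
    have hpos : (0:ℝ) < |θ + 2 * Real.pi * (j : ℝ)| / 2 := by
      have := hsep j; linarith
    have heq : ‖-(2 * (p:ℝ) + 1) * ((y + 2 * Real.pi * (j : ℝ)) ^ (2 * p + 2))⁻¹‖ =
        (2 * (p:ℝ) + 1) * (|y + 2 * Real.pi * (j : ℝ)| ^ (2 * p + 2))⁻¹ := by
      rw [norm_mul, norm_neg, norm_inv, norm_pow, Real.norm_eq_abs, Real.norm_eq_abs,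
        abs_of_pos (by positivity : (0:ℝ) < 2 * (p:ℝ) + 1)]
    have h2 : (|θ + 2 * Real.pi * (j : ℝ)| / 2) ^ (2 * p + 2) ≤
        |y + 2 * Real.pi * (j : ℝ)| ^ (2 * p + 2) := pow_le_pow_left₀ hpos.le h1 _
    have h3 : (|y + 2 * Real.pi * (j : ℝ)| ^ (2 * p + 2))⁻¹ ≤
        ((|θ + 2 * Real.pi * (j : ℝ)| / 2) ^ (2 * p + 2))⁻¹ :=
      inv_anti₀ (by positivity) h2
    have h4 : ((|θ + 2 * Real.pi * (j : ℝ)| / 2) ^ (2 * p + 2))⁻¹ =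
        2 ^ (2 * p + 2) * (|θ + 2 * Real.pi * (j : ℝ)| ^ (2 * p + 2))⁻¹ := by
      rw [div_pow, inv_div]
      ring
    calc ‖-(2 * (p:ℝ) + 1) * ((y + 2 * Real.pi * (j : ℝ)) ^ (2 * p + 2))⁻¹‖
        = (2 * (p:ℝ) + 1) * (|y + 2 * Real.pi * (j : ℝ)| ^ (2 * p + 2))⁻¹ := heq
      _ ≤ (2 * (p:ℝ) + 1) *
          (2 ^ (2 * p + 2) * (|θ + 2 * Real.pi * (j : ℝ)| ^ (2 * p + 2))⁻¹) := by
          apply mul_le_mul_of_nonneg_left _ (by positivity : (0:ℝ) ≤ 2 * (p:ℝ) + 1)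
          rw [← h4]
          exact h3
      _ = _ := by ring
  have hu : Summable fun j : ℤ => (2 * (p:ℝ) + 1) * 2 ^ (2 * p + 2) *
      (|θ + 2 * Real.pi * (j : ℝ)| ^ (2 * p + 2))⁻¹ :=
    (summable_shift_abs_pow θ (2 * p + 2) (by omega)).mul_left _
  have hg0 : Summable fun j : ℤ => ((θ + 2 * Real.pi * (j : ℝ)) ^ (2 * p + 1))⁻¹ := by
    apply Summable.of_norm_bounded (summable_shift_abs_pow θ (2 * p + 1) (by omega))
    intro j
    rw [Real.norm_eq_abs, abs_inv, abs_pow]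
  have hG : HasDerivAt (fun y : ℝ => ∑' j : ℤ, ((y + 2 * Real.pi * (j : ℝ)) ^ (2 * p + 1))⁻¹)
      (∑' j : ℤ, -(2 * (p:ℝ) + 1) * ((θ + 2 * Real.pi * (j : ℝ)) ^ (2 * p + 2))⁻¹) θ :=
    hasDerivAt_tsum_of_isPreconnected hu Metric.isOpen_ball
      (convex_ball θ ε).isPreconnected hderiv hbound (Metric.mem_ball_self hεpos)
      hg0 (Metric.mem_ball_self hεpos)
  have htsum : (∑' j : ℤ, -(2 * (p:ℝ) + 1) * ((θ + 2 * Real.pi * (j : ℝ)) ^ (2 * p + 2))⁻¹) =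
      -(2 * (p:ℝ) + 1) * ∑' j : ℤ, ((θ + 2 * Real.pi * (j : ℝ)) ^ (2 * p + 2))⁻¹ :=
    tsum_mul_left
  rw [htsum] at hG
  -- the smooth prefactor
  have hA : HasDerivAt (fun y : ℝ => -(2 - 2 * Real.cos y) ^ (p + 1))
      (-(((p:ℝ) + 1) * (2 - 2 * Real.cos θ) ^ p * (2 * Real.sin θ))) θ := by
    have h1 : HasDerivAt (fun y : ℝ => 2 - 2 * Real.cos y) (2 * Real.sin θ) θ := by
      have := ((Real.hasDerivAt_cos θ).const_mul (2:ℝ)).const_sub 2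
      refine this.congr_deriv ?_
      ring
    have h2 := (h1.pow (p + 1)).neg
    refine h2.congr_deriv ?_
    push_cast
    ring
  have hprod := hA.mul hG
  have hCp : Cp p = fun y : ℝ => -(2 - 2 * Real.cos y) ^ (p + 1) *
      ∑' j : ℤ, ((y + 2 * Real.pi * (j : ℝ)) ^ (2 * p + 1))⁻¹ := rfl
  rw [hCp]
  refine hprod.congr_deriv ?_
  -- algebraic identity for the derivative value
  have hcos1 : Real.cos θ ≠ 1 := by
    intro h
    obtain ⟨n, hn⟩ := (Real.cos_eq_one_iff θ).mp h
    exact hθ n (by linarith)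
  have hc : (1:ℝ) - Real.cos θ ≠ 0 := sub_ne_zero.mpr (Ne.symm hcos1)
  simp only [Cp, Mp]
  set S₁ := ∑' j : ℤ, ((θ + 2 * Real.pi * (j : ℝ)) ^ (2 * p + 1))⁻¹ with hS₁
  set S₂ := ∑' j : ℤ, ((θ + 2 * Real.pi * (j : ℝ)) ^ (2 * p + 2))⁻¹ with hS₂
  have hpow : (2 - 2 * Real.cos θ) ^ (p + 1) = (2 - 2 * Real.cos θ) ^ p * (2 - 2 * Real.cos θ) :=
    pow_succ _ _
  field_simp
  ring
end

section
/- For every integer p ≥ 1: the derivative (deriv C_p)(θ) tends to −1 as θ tends to 0 through nonzero values; moreover C_p is differentiable at π with derivative equal to (2p+1)·M_p(π), and this value is strictly positive. -/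
open Topology Filter

section Aux
open Metric

lemma sb : Summable (fun j : ℤ => ((2 * max 1 |(j:ℝ)|) ^ 2)⁻¹) := by
  apply Summable.of_norm_bounded_eventually (g := fun j : ℤ => ((j:ℝ) ^ 2)⁻¹)
  · simpa [one_div] using Real.summable_one_div_int_pow.mpr one_lt_two
  · rw [Filter.eventually_cofinite]
    apply Set.Finite.subset (Set.finite_singleton (0 : ℤ))
    intro j hj
    simp only [Set.mem_setOf_eq, not_le] at hj
    simp only [Set.mem_singleton_iff]
    by_contra h0
    have h1 : (1:ℝ) ≤ |(j:ℝ)| := by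
      rw [← Int.cast_abs]
      exact_mod_cast Int.one_le_abs (by exact_mod_cast h0)
    have hmax : max 1 |(j:ℝ)| = |(j:ℝ)| := max_eq_right h1
    have hb : ((2 * max 1 |(j:ℝ)|) ^ 2)⁻¹ ≤ ((j:ℝ) ^ 2)⁻¹ := by
      rw [hmax]
      apply inv_anti₀ (by positivity)
      have : (j:ℝ)^2 = |(j:ℝ)|^2 := (sq_abs _).symm
      nlinarith [abs_nonneg (j:ℝ)]
    have : ‖((2 * max 1 |(j:ℝ)|) ^ 2)⁻¹‖ = ((2 * max 1 |(j:ℝ)|) ^ 2)⁻¹ := by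
      rw [Real.norm_eq_abs, abs_of_nonneg (by positivity)]
    linarith [hj.trans_le (le_refl _), this ▸ hb]

lemma normbound {x : ℝ} {j : ℤ} {n : ℕ} (hn : 2 ≤ n) (hb : 2 * max 1 |(j:ℝ)| ≤ |x|) :
    ‖((x:ℝ) ^ n)⁻¹‖ ≤ ((2 * max 1 |(j:ℝ)|) ^ 2)⁻¹ := by
  have h1 : (1:ℝ) ≤ 2 * max 1 |(j:ℝ)| := by
    have := le_max_left (1:ℝ) |(j:ℝ)|
    linarith
  have hxpos : (0:ℝ) < |x| := lt_of_lt_of_le (by linarith) hb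
  rw [norm_inv, norm_pow, Real.norm_eq_abs]
  apply inv_anti₀ (by positivity)
  calc (2 * max 1 |(j:ℝ)|) ^ 2 ≤ (2 * max 1 |(j:ℝ)|) ^ n :=
        pow_le_pow_right₀ h1 hn
    _ ≤ |x| ^ n := pow_le_pow_left₀ (by linarith) hb n

lemma sm (n : ℕ) (hn : 2 ≤ n) (θ : ℝ) (mask : ℤ → Prop) [DecidablePred mask]
    (hb : ∀ j : ℤ, mask j → 2 * max 1 |(j:ℝ)| ≤ |θ + 2 * Real.pi * j|) :
    Summable (fun j : ℤ => if mask j then ((θ + 2 * Real.pi * (j:ℝ)) ^ n)⁻¹ else 0) := by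
  apply Summable.of_norm_bounded (g := fun j : ℤ => ((2 * max 1 |(j:ℝ)|) ^ 2)⁻¹) sb
  intro j
  by_cases h : mask j
  · rw [if_pos h]; exact normbound hn (hb j h)
  · rw [if_neg h]; simp only [norm_zero]; positivity

lemma hderiv_invpow (n : ℕ) (hn : 1 ≤ n) (c x : ℝ) (hx : x + c ≠ 0) :
    HasDerivAt (fun y => ((y + c) ^ n)⁻¹) (-(n:ℝ) * ((x + c) ^ (n+1))⁻¹) x := by
  have h1 : HasDerivAt (fun y : ℝ => (y + c) ^ n) ((n:ℝ) * (x + c) ^ (n-1) * 1) x :=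
    ((hasDerivAt_id x).add_const c).pow n
  have h2 := h1.inv (pow_ne_zero n hx)
  convert h2 using 1
  · rfl
  · rfl
  · rfl
  rw [mul_one]
  rw [div_eq_mul_inv]
  rw [neg_mul, neg_mul, neg_inj, mul_assoc]
  congr 1
  rw [← pow_mul]
  have key : (x+c)^(n-1) * (x+c)^(n+1) = (x+c)^(n*2) := by
    rw [← pow_add]; congr 1; omega
  rw [← key, mul_inv, ← mul_assoc, mul_inv_cancel₀ (pow_ne_zero _ hx), one_mul]

lemma main_deriv (n : ℕ) (hn : 2 ≤ n) (c : ℝ) (mask : ℤ → Prop) [DecidablePred mask]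
    (hb : ∀ θ ∈ ball c 1, ∀ j : ℤ, mask j → 2 * max 1 |(j:ℝ)| ≤ |θ + 2 * Real.pi * j|)
    {θ : ℝ} (hθ : θ ∈ ball c 1) :
    HasDerivAt (fun x => ∑' j : ℤ, if mask j then ((x + 2 * Real.pi * (j:ℝ)) ^ n)⁻¹ else 0)
      (∑' j : ℤ, if mask j then -(n:ℝ) * ((θ + 2 * Real.pi * (j:ℝ)) ^ (n+1))⁻¹ else 0) θ := by
  have hcball : c ∈ ball c 1 := mem_ball_self one_pos
  apply hasDerivAt_tsum_of_isPreconnected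
    (u := fun j : ℤ => (n:ℝ) * ((2 * max 1 |(j:ℝ)|) ^ 2)⁻¹)
    (sb.mul_left _) isOpen_ball (convex_ball c 1).isPreconnected
    (g' := fun j y => if mask j then -(n:ℝ) * ((y + 2 * Real.pi * (j:ℝ)) ^ (n+1))⁻¹ else 0)
    ?_ ?_ hcball ?_ hθ
  · intro j y hy
    by_cases h : mask j
    · simp only [if_pos h]
      have hne : y + 2 * Real.pi * (j:ℝ) ≠ 0 := by
        have := hb y hy j h
        have h1 : (1:ℝ) ≤ 2 * max 1 |(j:ℝ)| := by
          have := le_max_left (1:ℝ) |(j:ℝ)|; linarith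
        intro h0
        rw [h0, abs_zero] at this
        linarith
      exact hderiv_invpow n (by omega) _ y hne
    · simp only [if_neg h]
      exact hasDerivAt_const y 0
  · intro j y hy
    by_cases h : mask j
    · simp only [if_pos h]
      have hb' := hb y hy j h
      have h1 : (1:ℝ) ≤ 2 * max 1 |(j:ℝ)| := by
        have := le_max_left (1:ℝ) |(j:ℝ)|; linarith
      rw [norm_mul, norm_neg, Real.norm_natCast]
      apply mul_le_mul_of_nonneg_left _ (Nat.cast_nonneg n)
      exact normbound (by omega) hb'
    · simp only [if_neg h, norm_zero]
      positivity
  · exact sm n hn c mask (hb c hcball)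

lemma bound0 : ∀ θ ∈ ball (0:ℝ) 1, ∀ j : ℤ, j ≠ 0 →
    2 * max 1 |(j:ℝ)| ≤ |θ + 2 * Real.pi * j| := by
  intro θ hθ j hj
  rw [mem_ball, Real.dist_eq, sub_zero] at hθ
  have h1 : (1:ℝ) ≤ |(j:ℝ)| := by
    rw [← Int.cast_abs]; exact_mod_cast Int.one_le_abs hj
  have hmax : max 1 |(j:ℝ)| = |(j:ℝ)| := max_eq_right h1
  have h2 := abs_sub_abs_le_abs_sub (2 * Real.pi * (j:ℝ)) (-θ)
  rw [sub_neg_eq_add, abs_neg] at h2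
  have h3 : |2 * Real.pi * (j:ℝ)| = 2 * Real.pi * |(j:ℝ)| := by
    rw [abs_mul, abs_of_pos (by positivity : (0:ℝ) < 2 * Real.pi)]
  have h4 : |2 * Real.pi * (j:ℝ) + θ| = |θ + 2 * Real.pi * j| := by rw [add_comm]
  rw [h3, h4] at h2
  rw [hmax]
  nlinarith [Real.pi_gt_three]

lemma boundpi : ∀ θ ∈ ball Real.pi 1, ∀ j : ℤ, (fun _ : ℤ => True) j →
    2 * max 1 |(j:ℝ)| ≤ |θ + 2 * Real.pi * j| := by
  intro θ hθ j _
  rw [mem_ball, Real.dist_eq] at hθ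
  have hθ1 : Real.pi - 1 < θ := by cases abs_lt.mp hθ; linarith
  have hθ2 : θ < Real.pi + 1 := by cases abs_lt.mp hθ; linarith
  by_cases hj : j = 0
  · subst hj
    simp only [Int.cast_zero, abs_zero, max_self, mul_zero, add_zero]
    rw [max_eq_left (by norm_num : (0:ℝ) ≤ 1), abs_of_pos (by nlinarith [Real.pi_gt_three])]
    nlinarith [Real.pi_gt_three]
  · have h1 : (1:ℝ) ≤ |(j:ℝ)| := by
      rw [← Int.cast_abs]; exact_mod_cast Int.one_le_abs hj
    have hmax : max 1 |(j:ℝ)| = |(j:ℝ)| := max_eq_right h1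
    have h2 := abs_sub_abs_le_abs_sub (2 * Real.pi * (j:ℝ)) (-θ)
    rw [sub_neg_eq_add, abs_neg] at h2
    have h3 : |2 * Real.pi * (j:ℝ)| = 2 * Real.pi * |(j:ℝ)| := by
      rw [abs_mul, abs_of_pos (by positivity : (0:ℝ) < 2 * Real.pi)]
    have h4 : |2 * Real.pi * (j:ℝ) + θ| = |θ + 2 * Real.pi * j| := by rw [add_comm]
    rw [h3, h4] at h2
    have hθabs : |θ| < Real.pi + 1 := by
      rw [abs_of_pos (by nlinarith [Real.pi_gt_three])]; exact hθ2
    rw [hmax]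
    nlinarith [Real.pi_gt_three]

lemma hasDerivAt_f (p : ℕ) (x : ℝ) :
    HasDerivAt (fun y => (2 - 2 * Real.cos y) ^ (p + 1))
      (((p:ℝ)+1) * (2 - 2 * Real.cos x) ^ p * (2 * Real.sin x)) x := by
  have h1 : HasDerivAt (fun y : ℝ => 2 - 2 * Real.cos y) (2 * Real.sin x) x := by
    have := ((Real.hasDerivAt_cos x).const_mul (2:ℝ)).const_sub 2
    convert this using 1; rfl; rfl; ring
  have := h1.pow (p + 1)
  convert this using 1
  · rfl
  · rfl
  · rfl
  push_cast
  simp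

lemma hs_lim : Tendsto (fun θ : ℝ => Real.sin θ * θ⁻¹) (𝓝[≠] (0:ℝ)) (𝓝 1) := by
  have h := Real.hasDerivAt_sin 0
  rw [hasDerivAt_iff_tendsto_slope, Real.cos_zero] at h
  apply h.congr'
  filter_upwards [self_mem_nhdsWithin] with θ hθ
  rw [slope_def_field]
  rw [Real.sin_zero, sub_zero, sub_zero, div_eq_mul_inv]

lemma hhalf : Tendsto (fun θ : ℝ => θ / 2) (𝓝[≠] (0:ℝ)) (𝓝[≠] (0:ℝ)) := by
  rw [tendsto_nhdsWithin_iff]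
  constructor
  · have : Tendsto (fun θ : ℝ => θ / 2) (𝓝 0) (𝓝 (0/2)) :=
      (continuous_id.div_const 2).tendsto 0
    rw [zero_div] at this
    exact this.mono_left nhdsWithin_le_nhds
  · filter_upwards [self_mem_nhdsWithin] with θ hθ
    simp only [Set.mem_compl_iff, Set.mem_singleton_iff] at hθ ⊢
    exact div_ne_zero hθ two_ne_zero

lemma hq_lim : Tendsto (fun θ : ℝ => (2 - 2 * Real.cos θ) * ((θ^2)⁻¹)) (𝓝[≠] (0:ℝ)) (𝓝 1) := by
  have h2 : Tendsto (fun θ : ℝ => (Real.sin (θ/2) * (θ/2)⁻¹)^2) (𝓝[≠] (0:ℝ)) (𝓝 1) := by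
    have := (hs_lim.comp hhalf).pow 2
    simpa using this
  apply h2.congr'
  filter_upwards [self_mem_nhdsWithin] with θ hθ
  have hθ' : θ ≠ 0 := hθ
  rw [mul_pow, Real.sin_sq_eq_half_sub]
  have h3 : 2 * (θ/2) = θ := by ring
  rw [h3]
  field_simp

noncomputable def fP (p : ℕ) (x : ℝ) : ℝ := (2 - 2 * Real.cos x) ^ (p + 1)
noncomputable def fdP (p : ℕ) (x : ℝ) : ℝ :=
  ((p:ℝ)+1) * (2 - 2 * Real.cos x) ^ p * (2 * Real.sin x)
noncomputable def Rp (p : ℕ) (x : ℝ) : ℝ :=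
  ∑' j : ℤ, if j ≠ 0 then ((x + 2 * Real.pi * (j:ℝ)) ^ (2*p+1))⁻¹ else 0
noncomputable def Rp2 (p : ℕ) (x : ℝ) : ℝ :=
  ∑' j : ℤ, if j ≠ 0 then ((x + 2 * Real.pi * (j:ℝ)) ^ (2*p+2))⁻¹ else 0

lemma hasDerivAt_Rp (p : ℕ) (hp : 1 ≤ p) {θ : ℝ} (hθ : θ ∈ ball (0:ℝ) 1) :
    HasDerivAt (Rp p) (-((2*p+1:ℕ):ℝ) * Rp2 p θ) θ := by
  have h := main_deriv (2*p+1) (by omega) 0 (fun j => j ≠ 0) bound0 hθ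
  simp only [show 2*p+1+1 = 2*p+2 from by omega] at h
  convert h using 1
  · rfl
  rw [Rp2, ← tsum_mul_left]
  congr 1 with j
  by_cases hj : j = 0 <;> simp [hj]

lemma contAt_Rp2 (p : ℕ) : ContinuousAt (Rp2 p) 0 := by
  have h := main_deriv (2*p+2) (by omega) 0 (fun j => j ≠ 0) bound0 (mem_ball_self one_pos)
  exact h.continuousAt

lemma alg (p : ℕ) {θ : ℝ} (hθ : θ ≠ 0) (c S : ℝ) :
    -(((p:ℝ)+1) * c^p * (2*S)) * (θ^(2*p+1))⁻¹
      + (-(c^(p+1))) * (-((2*p+1:ℕ):ℝ) * (θ^(2*p+2))⁻¹)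
    = -(2*((p:ℝ)+1)) * (c^p * (θ^(2*p))⁻¹) * (S * θ⁻¹)
      + ((2*p+1:ℕ):ℝ) * (c^(p+1) * (θ^(2*(p+1)))⁻¹) := by
  have e1 : (θ^(2*p+1))⁻¹ = (θ^(2*p))⁻¹ * θ⁻¹ := by rw [pow_succ, mul_inv]
  have e2 : (θ^(2*p+2))⁻¹ = (θ^(2*(p+1)))⁻¹ := by
    rw [show 2*p+2 = 2*(p+1) from by omega]
  rw [e1, e2]
  push_cast
  ring

lemma part1 (p : ℕ) (hp : 1 ≤ p) :
    Tendsto (fun θ : ℝ => deriv (Cp p) θ) (𝓝[≠] (0:ℝ)) (𝓝 (-1)) := by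
  have hE : (ball (0:ℝ) 1 ∩ {(0:ℝ)}ᶜ) ∈ 𝓝[≠] (0:ℝ) :=
    inter_mem (mem_nhdsWithin_of_mem_nhds (ball_mem_nhds 0 one_pos)) self_mem_nhdsWithin
  have hEopen : IsOpen (ball (0:ℝ) 1 ∩ {(0:ℝ)}ᶜ) := isOpen_ball.inter isOpen_compl_singleton
  have hsplit : ∀ x ∈ ball (0:ℝ) 1 ∩ {(0:ℝ)}ᶜ,
      Cp p x = -(fP p x) * ((x^(2*p+1))⁻¹ + Rp p x) := by
    intro x hx
    have hsum2 : Summable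
        (fun j : ℤ => if j ≠ 0 then ((x + 2*Real.pi*(j:ℝ))^(2*p+1))⁻¹ else 0) :=
      sm (2*p+1) (by omega) x (fun j => j ≠ 0) (bound0 x hx.1)
    have hsum1 : Summable
        (fun j : ℤ => if j = 0 then ((x + 2*Real.pi*(j:ℝ))^(2*p+1))⁻¹ else 0) := by
      apply summable_of_ne_finset_zero (s := {0})
      intro j hj
      simp only [Finset.mem_singleton] at hj
      exact if_neg hj
    have hfun : (fun j : ℤ => ((x + 2*Real.pi*(j:ℝ))^(2*p+1))⁻¹)
        = fun j : ℤ => (if j = 0 then ((x + 2*Real.pi*(j:ℝ))^(2*p+1))⁻¹ else 0)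
          + (if j ≠ 0 then ((x + 2*Real.pi*(j:ℝ))^(2*p+1))⁻¹ else 0) := by
      funext j; by_cases hj : j = 0 <;> simp [hj]
    have hone : (fun j : ℤ => if j = 0 then ((x + 2*Real.pi*(j:ℝ))^(2*p+1))⁻¹ else 0)
        = fun j : ℤ => if j = 0 then ((x:ℝ)^(2*p+1))⁻¹ else 0 := by
      funext j
      by_cases hj : j = 0
      · subst hj; simp
      · simp [hj]
    unfold Cp fP Rp
    rw [hfun, Summable.tsum_add hsum1 hsum2, hone, tsum_ite_eq]
  have hG : ∀ θ ∈ ball (0:ℝ) 1 ∩ {(0:ℝ)}ᶜ,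
      HasDerivAt (fun x => -(fP p x) * ((x^(2*p+1))⁻¹ + Rp p x))
        (-(fdP p θ) * ((θ^(2*p+1))⁻¹ + Rp p θ)
          + (-(fP p θ)) * (-((2*p+1:ℕ):ℝ) * (θ^(2*p+2))⁻¹
              + -((2*p+1:ℕ):ℝ) * Rp2 p θ)) θ := by
    intro θ hθ
    have hθ0 : θ ≠ 0 := hθ.2
    have hA : HasDerivAt (fun x : ℝ => (x^(2*p+1))⁻¹)
        (-((2*p+1:ℕ):ℝ) * (θ^(2*p+2))⁻¹) θ := by
      have h := hderiv_invpow (2*p+1) (by omega) 0 θ (by simpa using hθ0)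
      simp only [add_zero, show 2*p+1+1 = 2*p+2 from by omega] at h
      exact h
    exact ((hasDerivAt_f p θ).neg.mul (hA.add (hasDerivAt_Rp p hp hθ.1)))
  have hderiv_eq : ∀ᶠ θ in 𝓝[≠] (0:ℝ), deriv (Cp p) θ
      = -(fdP p θ) * ((θ^(2*p+1))⁻¹ + Rp p θ)
          + (-(fP p θ)) * (-((2*p+1:ℕ):ℝ) * (θ^(2*p+2))⁻¹
              + -((2*p+1:ℕ):ℝ) * Rp2 p θ) := by
    filter_upwards [hE] with θ hθ
    have hev : Cp p =ᶠ[𝓝 θ] (fun x => -(fP p x) * ((x^(2*p+1))⁻¹ + Rp p x)) :=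
      eventually_of_mem (hEopen.mem_nhds hθ) hsplit
    rw [hev.deriv_eq, (hG θ hθ).deriv]
  have hq2 : ∀ k : ℕ, Tendsto (fun θ : ℝ => (2 - 2*Real.cos θ)^k * ((θ^(2*k))⁻¹))
      (𝓝[≠] (0:ℝ)) (𝓝 1) := by
    intro k
    have h := hq_lim.pow k
    rw [one_pow] at h
    apply h.congr
    intro θ
    rw [mul_pow, inv_pow, ← pow_mul]
  have hH : Tendsto (fun θ : ℝ =>
      -(2*((p:ℝ)+1)) * ((2 - 2*Real.cos θ)^p * ((θ^(2*p))⁻¹)) * (Real.sin θ * θ⁻¹)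
      + ((2*p+1:ℕ):ℝ) * ((2 - 2*Real.cos θ)^(p+1) * ((θ^(2*(p+1)))⁻¹))
      + (-(fdP p θ) * Rp p θ + (-(fP p θ)) * (-((2*p+1:ℕ):ℝ) * Rp2 p θ)))
      (𝓝[≠] (0:ℝ)) (𝓝 (-1)) := by
    have t1 : Tendsto (fun θ : ℝ =>
        -(2*((p:ℝ)+1)) * ((2 - 2*Real.cos θ)^p * ((θ^(2*p))⁻¹)) * (Real.sin θ * θ⁻¹))
        (𝓝[≠] (0:ℝ)) (𝓝 (-(2*((p:ℝ)+1)) * 1 * 1)) :=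
      (tendsto_const_nhds.mul (hq2 p)).mul hs_lim
    have t2 : Tendsto (fun θ : ℝ =>
        ((2*p+1:ℕ):ℝ) * ((2 - 2*Real.cos θ)^(p+1) * ((θ^(2*(p+1)))⁻¹)))
        (𝓝[≠] (0:ℝ)) (𝓝 (((2*p+1:ℕ):ℝ) * 1)) :=
      tendsto_const_nhds.mul (hq2 (p+1))
    have t3 : Tendsto (fun θ : ℝ =>
        -(fdP p θ) * Rp p θ + (-(fP p θ)) * (-((2*p+1:ℕ):ℝ) * Rp2 p θ))
        (𝓝[≠] (0:ℝ)) (𝓝 0) := by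
      have hcfd : ContinuousAt (fdP p) 0 := by unfold fdP; fun_prop
      have hcf : ContinuousAt (fP p) 0 := by unfold fP; fun_prop
      have hcR : ContinuousAt (Rp p) 0 :=
        (hasDerivAt_Rp p hp (mem_ball_self one_pos)).continuousAt
      have hc : ContinuousAt (fun θ : ℝ =>
          -(fdP p θ) * Rp p θ + (-(fP p θ)) * (-((2*p+1:ℕ):ℝ) * Rp2 p θ)) 0 :=
        (hcfd.neg.mul hcR).add (hcf.neg.mul ((contAt_Rp2 p).const_mul _))
      have h0 : -(fdP p 0) * Rp p 0 + (-(fP p 0)) * (-((2*p+1:ℕ):ℝ) * Rp2 p 0) = 0 := by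
        simp [fdP, fP, Real.sin_zero, Real.cos_zero]
      have ht := hc.tendsto.mono_left (nhdsWithin_le_nhds (s := {(0:ℝ)}ᶜ))
      rwa [h0] at ht
    have hsum := (t1.add t2).add t3
    convert hsum using 2
    push_cast
    ring
  apply Tendsto.congr' ?_ hH
  filter_upwards [hE, hderiv_eq] with θ hθ hdθ
  rw [hdθ]
  have halg := alg p hθ.2 (2 - 2*Real.cos θ) (Real.sin θ)
  unfold fdP fP
  linear_combination halg

lemma part2 (p : ℕ) (hp : 1 ≤ p) :
    HasDerivAt (Cp p) ((2 * p + 1 : ℝ) * Mp p Real.pi) Real.pi := by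
  have hS := main_deriv (2*p+1) (by omega) Real.pi (fun _ => True) boundpi
    (mem_ball_self one_pos)
  simp only [if_true, show 2*p+1+1 = 2*p+2 from by omega] at hS
  have hfπ := (hasDerivAt_f p Real.pi).neg
  have h := hfπ.mul hS
  have hCpEq : Cp p = fun x => (fun y => -((2 - 2*Real.cos y)^(p+1))) x *
      ((fun y => ∑' j : ℤ, ((y + 2*Real.pi*(j:ℝ))^(2*p+1))⁻¹) x) := rfl
  rw [show ((2 * p + 1 : ℝ) * Mp p Real.pi) =
      -(((p:ℝ)+1) * (2 - 2*Real.cos Real.pi)^p * (2*Real.sin Real.pi)) *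
        (∑' j : ℤ, ((Real.pi + 2*Real.pi*(j:ℝ))^(2*p+1))⁻¹)
      + (-((2 - 2*Real.cos Real.pi)^(p+1))) *
        (∑' j : ℤ, -((2*p+1:ℕ):ℝ) * ((Real.pi + 2*Real.pi*(j:ℝ))^(2*p+2))⁻¹) from ?_]
  · exact h
  · rw [tsum_mul_left, Mp, Real.sin_pi, Real.cos_pi]
    push_cast
    ring

lemma part3 (p : ℕ) (hp : 1 ≤ p) : 0 < (2 * p + 1 : ℝ) * Mp p Real.pi := by
  have hsumπ : Summable (fun j : ℤ => ((Real.pi + 2*Real.pi*(j:ℝ))^(2*p+2))⁻¹) := by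
    have h := sm (2*p+2) (by omega) Real.pi (fun _ => True)
      (boundpi Real.pi (mem_ball_self one_pos))
    simpa using h
  have hpos : 0 < ∑' j : ℤ, ((Real.pi + 2*Real.pi*(j:ℝ))^(2*p+2))⁻¹ := by
    have hnn : ∀ j : ℤ, 0 ≤ ((Real.pi + 2*Real.pi*(j:ℝ))^(2*p+2))⁻¹ := by
      intro j
      have hne : Real.pi + 2*Real.pi*(j:ℝ) ≠ 0 := by
        have hb := boundpi Real.pi (mem_ball_self one_pos) j trivial
        intro h0
        rw [h0, abs_zero] at hb
        have := le_max_left (1:ℝ) |(j:ℝ)|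
        linarith
      have hpow : 0 < (Real.pi + 2*Real.pi*(j:ℝ))^(2*p+2) := by
        rw [show 2*p+2 = 2*(p+1) from by omega, pow_mul]
        positivity
      positivity
    apply Summable.tsum_pos hsumπ hnn 0
    simp only [Int.cast_zero, mul_zero, add_zero]
    positivity
  have hM : 0 < Mp p Real.pi := by
    rw [Mp]
    apply mul_pos _ hpos
    rw [Real.cos_pi]
    norm_num
  positivity

end Aux

/-- For every `p ≥ 1`: `C_p'(θ) → -1` as `θ → 0` through nonzero values; moreover
`C_p` is differentiable at `π` with derivative `(2p+1)·M_p(π) > 0`. -/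
theorem Cp_deriv_limits (p : ℕ) (hp : 1 ≤ p) :
    Tendsto (fun θ : ℝ => deriv (Cp p) θ) (𝓝[≠] (0 : ℝ)) (𝓝 (-1)) ∧
    HasDerivAt (Cp p) ((2 * p + 1 : ℝ) * Mp p Real.pi) Real.pi ∧
    0 < (2 * p + 1 : ℝ) * Mp p Real.pi := by
  exact ⟨part1 p hp, part2 p hp, part3 p hp⟩
end

section
/- For every integer p ≥ 1 and every θ ∈ (0,π), one has ∑_{j∈ℤ} (θ+2πj)^{−(2p+1)} < θ·∑_{j∈ℤ} (θ+2πj)^{−(2p+2)}. -/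
open Real

private lemma ne_zero_aux (θ : ℝ) (hθ0 : 0 < θ) (hθπ : θ < Real.pi) (j : ℤ) :
    θ + 2 * Real.pi * (j : ℝ) ≠ 0 := by
  have hπ := Real.pi_gt_three
  rcases le_or_gt 0 j with h | h
  · have hj : (0 : ℝ) ≤ (j : ℝ) := by exact_mod_cast h
    nlinarith
  · have hj : (j : ℝ) ≤ -1 := by exact_mod_cast (by omega : j ≤ -1)
    nlinarith

private lemma summable_aux (θ : ℝ) (hθ0 : 0 < θ) (hθπ : θ < Real.pi) (k : ℕ) (hk : 2 ≤ k) :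
    Summable (fun j : ℤ => ((θ + 2 * Real.pi * (j : ℝ)) ^ k)⁻¹) := by
  have hg : Summable (fun j : ℤ => ((j : ℝ) ^ 2)⁻¹) := by
    have := Real.summable_one_div_int_pow.2 (by norm_num : (1:ℕ) < 2)
    simpa [one_div] using this
  refine Summable.of_norm_bounded_eventually hg ?_
  have : {j : ℤ | ¬ ‖((θ + 2 * Real.pi * (j : ℝ)) ^ k)⁻¹‖ ≤ ((j : ℝ) ^ 2)⁻¹} ⊆ {0} := by
    intro j hj
    simp only [Set.mem_setOf_eq] at hj
    by_contra hj0
    have hj0' : j ≠ 0 := by simpa using hj0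
    have hj1 : (1 : ℝ) ≤ |(j : ℝ)| := by exact_mod_cast Int.one_le_abs hj0'
    have hπ := Real.pi_gt_three
    have hkey : |(j : ℝ)| ≤ |θ + 2 * Real.pi * (j : ℝ)| := by
      have h1 : |2 * Real.pi * (j : ℝ)| - |θ| ≤ |θ + 2 * Real.pi * (j : ℝ)| := by
        have := abs_sub_abs_le_abs_sub (2 * Real.pi * (j : ℝ)) (-θ)
        simpa [sub_neg_eq_add, add_comm] using this
      have h2 : |2 * Real.pi * (j : ℝ)| = 2 * Real.pi * |(j : ℝ)| := by
        rw [abs_mul, abs_of_pos (by positivity : (0:ℝ) < 2 * Real.pi)]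
      rw [h2, abs_of_pos hθ0] at h1
      nlinarith
    apply hj
    have habs : |(j : ℝ)| ^ 2 ≤ |θ + 2 * Real.pi * (j : ℝ)| ^ k := by
      calc |(j : ℝ)| ^ 2 ≤ |(j : ℝ)| ^ k := pow_le_pow_right₀ hj1 hk
        _ ≤ |θ + 2 * Real.pi * (j : ℝ)| ^ k := pow_le_pow_left₀ (abs_nonneg _) hkey k
    rw [norm_inv, norm_pow, Real.norm_eq_abs, ← sq_abs (j : ℝ)]
    exact inv_anti₀ (by positivity) habs
  exact Set.Finite.subset (Set.finite_singleton 0) this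

/-- comparison of inverses of even powers via absolute values -/
private lemma inv_even_pow_le (m : ℕ) (a b : ℝ) (hb : b ≠ 0) (h : |b| ≤ |a|) :
    (a ^ (2 * m + 2))⁻¹ ≤ (b ^ (2 * m + 2))⁻¹ := by
  have hev : Even (2 * m + 2) := ⟨m + 1, by ring⟩
  have hbpos : 0 < b ^ (2 * m + 2) := hev.pow_pos hb
  apply inv_anti₀ hbpos
  calc b ^ (2 * m + 2) = |b| ^ (2 * m + 2) := (hev.pow_abs _).symm
    _ ≤ |a| ^ (2 * m + 2) := pow_le_pow_left₀ (abs_nonneg _) h _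
    _ = a ^ (2 * m + 2) := hev.pow_abs _

private lemma inv_even_pow_lt (m : ℕ) (a b : ℝ) (hb : b ≠ 0) (h : |b| < |a|) :
    (a ^ (2 * m + 2))⁻¹ < (b ^ (2 * m + 2))⁻¹ := by
  have hev : Even (2 * m + 2) := ⟨m + 1, by ring⟩
  have hbpos : 0 < b ^ (2 * m + 2) := hev.pow_pos hb
  apply inv_strictAnti₀ hbpos
  calc b ^ (2 * m + 2) = |b| ^ (2 * m + 2) := (hev.pow_abs _).symm
    _ < |a| ^ (2 * m + 2) := pow_lt_pow_left₀ h (abs_nonneg _) (by omega)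
    _ = a ^ (2 * m + 2) := hev.pow_abs _

set_option maxHeartbeats 1000000 in
/-- Lemma A.1: for `p ≥ 1` and `θ ∈ (0,π)`,
`∑_{j∈ℤ} (θ+2πj)^{-(2p+1)} < θ · ∑_{j∈ℤ} (θ+2πj)^{-(2p+2)}`. -/
theorem lemma_A1 (p : ℕ) (hp : 1 ≤ p) (θ : ℝ) (hθ : θ ∈ Set.Ioo (0 : ℝ) Real.pi) :
    (∑' j : ℤ, ((θ + 2 * Real.pi * (j : ℝ)) ^ (2 * p + 1))⁻¹)
      < θ * ∑' j : ℤ, ((θ + 2 * Real.pi * (j : ℝ)) ^ (2 * p + 2))⁻¹ := by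
  obtain ⟨hθ0, hθπ⟩ := hθ
  have hπ := Real.pi_gt_three
  have hx := ne_zero_aux θ hθ0 hθπ
  have hx' : ∀ j : ℤ, θ - 2 * Real.pi * (j : ℝ) ≠ 0 := by
    intro j
    have := hx (-j)
    push_cast at this
    intro h; apply this; linarith
  set f1 : ℤ → ℝ := fun j => ((θ + 2 * Real.pi * (j : ℝ)) ^ (2 * p + 1))⁻¹ with hf1
  set f2 : ℤ → ℝ := fun j => ((θ + 2 * Real.pi * (j : ℝ)) ^ (2 * p + 2))⁻¹ with hf2
  have hA : Summable f1 := summable_aux θ hθ0 hθπ _ (by omega)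
  have hB : Summable f2 := summable_aux θ hθ0 hθπ _ (by omega)
  set F : ℤ → ℝ := fun j => θ * f2 j - f1 j with hF
  have hFsum : Summable F := (hB.mul_left θ).sub hA
  have htsum : ∑' j, F j = θ * ∑' j, f2 j - ∑' j, f1 j := by
    rw [Summable.tsum_sub (hB.mul_left θ) hA, tsum_mul_left]
  rw [← sub_pos, ← htsum]
  -- pair j with -j
  have hFneg : Summable (fun j : ℤ => F (-j)) := (Equiv.neg ℤ).summable_iff.2 hFsum
  have hnegsum : ∑' j : ℤ, F (-j) = ∑' j, F j := by
    simpa using (Equiv.neg ℤ).tsum_eq F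
  have hpair : ∑' j : ℤ, (F j + F (-j)) = 2 * ∑' j, F j := by
    rw [Summable.tsum_add hFsum hFneg, hnegsum]
    ring
  set G : ℤ → ℝ := fun j => 2 * Real.pi * (j : ℝ) *
      (((θ - 2 * Real.pi * (j : ℝ)) ^ (2 * p + 2))⁻¹
        - ((θ + 2 * Real.pi * (j : ℝ)) ^ (2 * p + 2))⁻¹) with hG
  have key : ∀ j : ℤ, F j + F (-j) = G j := by
    intro j
    have ha := hx j
    have hb := hx' j
    simp only [hF, hf1, hf2, hG, F, f1, f2, G]
    push_cast
    have e1 : θ + 2 * Real.pi * (-(j : ℝ)) = θ - 2 * Real.pi * (j : ℝ) := by ring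
    rw [e1]
    field_simp
    ring
  have hnn : ∀ j : ℤ, 0 ≤ G j := by
    intro j
    have ha := hx j
    have hb := hx' j
    rcases lt_trichotomy (j : ℝ) 0 with hj | hj | hj
    · -- j ≤ -1
      have hjz : j < 0 := by exact_mod_cast hj
      have hj1 : (j : ℝ) ≤ -1 := by exact_mod_cast (by omega : j ≤ -1)
      have h1 : 2 * Real.pi * (j : ℝ) ≤ 0 := by nlinarith
      have hbpos : 0 < θ - 2 * Real.pi * (j : ℝ) := by nlinarith
      have h2 : ((θ - 2 * Real.pi * (j : ℝ)) ^ (2 * p + 2))⁻¹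
          - ((θ + 2 * Real.pi * (j : ℝ)) ^ (2 * p + 2))⁻¹ ≤ 0 := by
        rw [sub_nonpos]
        apply inv_even_pow_le p _ _ ha
        rw [abs_of_pos hbpos, abs_le]
        constructor <;> nlinarith
      have := mul_nonneg (neg_nonneg.mpr h1) (neg_nonneg.mpr h2)
      simp only [hG]
      nlinarith
    · simp [hG, hj]
    · -- j ≥ 1
      have hjz : 0 < j := by exact_mod_cast hj
      have hj1 : (1 : ℝ) ≤ (j : ℝ) := by exact_mod_cast hjz
      have h1 : 0 ≤ 2 * Real.pi * (j : ℝ) := by nlinarith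
      have hapos : 0 < θ + 2 * Real.pi * (j : ℝ) := by nlinarith
      apply mul_nonneg h1
      rw [sub_nonneg]
      apply inv_even_pow_le p _ _ hb
      rw [abs_of_pos hapos, abs_le]
      constructor <;> nlinarith
  have hG1 : 0 < G 1 := by
    simp only [hG, G]
    push_cast
    apply mul_pos (by positivity)
    rw [sub_pos]
    have hb1 : θ - 2 * Real.pi * (1 : ℝ) ≠ 0 := by
      have := hx' 1; push_cast at this; simpa using this
    apply inv_even_pow_lt p _ _ hb1
    rw [abs_of_pos (by nlinarith : (0:ℝ) < θ + 2 * Real.pi * 1), abs_lt]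
    constructor <;> nlinarith
  have hGsum : Summable G := by
    refine (hFsum.add hFneg).congr key
  have hGpos : 0 < ∑' j, G j := Summable.tsum_pos hGsum hnn 1 hG1
  have : ∑' j : ℤ, (F j + F (-j)) = ∑' j, G j := tsum_congr key
  linarith [hpair ▸ this ▸ hGpos]
end

section
/- For every integer p ≥ 1 and every θ ∈ (0,π), one has ∑_{j∈ℤ} (θ+2πj)^{−(2p+1)} > θ·sin θ·∑_{j∈ℤ} (θ+2πj)^{−(2p+3)}. -/
set_option maxHeartbeats 1000000

open Real

private lemma lemB1_sin_ub {θ : ℝ} (h0 : 0 < θ) (hπ : θ < π) :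
    Real.sin θ ≤ θ - θ^3 / (2 * π^2) := by
  have hπ0 := Real.pi_pos
  have h1 : Real.sin θ = 2 * Real.sin (θ/2) * Real.cos (θ/2) := by
    rw [← Real.sin_two_mul]; ring_nf
  have h2 : Real.sin (θ/2) ≤ θ/2 := Real.sin_le (by linarith)
  have h3 : Real.cos (θ/2) ≤ 1 - 2/π^2 * (θ/2)^2 := by
    apply Real.cos_le_one_sub_mul_cos_sq
    rw [abs_of_pos (by linarith)]
    linarith
  have h4 : 0 ≤ Real.cos (θ/2) := Real.cos_nonneg_of_mem_Icc ⟨by linarith, by linarith⟩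
  have h5 : 0 ≤ Real.sin (θ/2) := Real.sin_nonneg_of_nonneg_of_le_pi (by linarith) (by linarith)
  have hπ2 : (0:ℝ) < π^2 := by positivity
  rw [h1]
  have hmul : 2 * Real.sin (θ/2) * Real.cos (θ/2) ≤ 2 * (θ/2) * (1 - 2/π^2 * (θ/2)^2) := by
    have := mul_le_mul h2 h3 h4 (by linarith)
    nlinarith
  calc 2 * Real.sin (θ/2) * Real.cos (θ/2) ≤ 2 * (θ/2) * (1 - 2/π^2 * (θ/2)^2) := hmul
    _ = θ - θ^3 / (2*π^2) := by field_simp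

private lemma lemB1_sin_ub2 {θ : ℝ} (hπ : θ < π) : Real.sin θ ≤ π - θ := by
  linarith [Real.sin_le (by linarith : (0:ℝ) ≤ π - θ), (Real.sin_pi_sub θ).symm]

private lemma lemB1_keyK {θ : ℝ} (h0 : 0 < θ) (hπ : θ < π) :
    2 * π * Real.sin θ * θ^3 < (θ - Real.sin θ) * (2*π - θ)^4 := by
  have hπ0 := Real.pi_pos
  have hs0 : 0 < Real.sin θ := Real.sin_pos_of_pos_of_lt_pi h0 hπ
  have h1 : θ^3/(2*π^2) ≤ θ - Real.sin θ := by linarith [lemB1_sin_ub h0 hπ]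
  have h2 : 4 * π^3 * Real.sin θ < (2*π - θ)^4 := by
    have hu : Real.sin θ ≤ π - θ := lemB1_sin_ub2 hπ
    nlinarith [sq_nonneg (π - θ), sq_nonneg ((π-θ)^2), pow_pos hπ0 4, sq_nonneg (π*(π-θ))]
  have h3 : 0 < θ^3/(2*π^2) := by positivity
  calc 2*π*Real.sin θ*θ^3 = (θ^3/(2*π^2)) * (4*π^3*Real.sin θ) := by field_simp; ring
    _ < (θ^3/(2*π^2)) * (2*π-θ)^4 := mul_lt_mul_of_pos_left h2 h3
    _ ≤ (θ - Real.sin θ) * (2*π-θ)^4 := mul_le_mul_of_nonneg_right h1 (by positivity)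

private lemma lemB1_main_ineq (a b c s t : ℝ) (ha : 0 < a) (hab : a < b)
    (hst : s ≤ t) (hca : c < a^2)
    (hkey : c*a*(a+b)*s < (a^2-c)*b^2*t) :
    c * (b^2*(b*t) - a^2*(a*s)) < a^2*b^2*(b*t - a*s) := by
  have hba : 0 < b - a := by linarith
  have h1 : (c*a*(a+b)*s) * (b-a) < ((a^2-c)*b^2*t) * (b-a) :=
    mul_lt_mul_of_pos_right hkey hba
  have h2 : a*s ≤ a*t := mul_le_mul_of_nonneg_left hst ha.le
  nlinarith [mul_le_mul_of_nonneg_left h2 (by nlinarith : (0:ℝ) ≤ (a^2-c)*b^2)]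

private lemma lemB1_div_step (a b c A B : ℝ) (ha : 0 < a) (hb : 0 < b) (hA : 0 < A)
    (hB : 0 < B) (h : c * (b^2*B - a^2*A) < a^2*b^2*(B - A)) :
    c * ((a^2*A)⁻¹ - (b^2*B)⁻¹) < A⁻¹ - B⁻¹ := by
  have e1 : c * ((a^2*A)⁻¹ - (b^2*B)⁻¹) = c*(b^2*B - a^2*A) / ((a^2*A)*(b^2*B)) := by
    field_simp; try ring
  have e2 : A⁻¹ - B⁻¹ = a^2*b^2*(B-A) / ((a^2*A)*(b^2*B)) := by
    field_simp; try ring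
  rw [e1, e2]
  exact (div_lt_div_iff_of_pos_right (by positivity)).mpr h

/-- The key per-pair inequality. -/
private lemma lemB1_pair (p : ℕ) (hp : 1 ≤ p) {θ : ℝ} (h0 : 0 < θ) (hπ : θ < π) (k : ℕ) :
    θ * Real.sin θ * (((θ + 2*π*(k:ℝ))^(2*p+3))⁻¹ - ((2*π*((k:ℝ)+1) - θ)^(2*p+3))⁻¹)
      < ((θ + 2*π*(k:ℝ))^(2*p+1))⁻¹ - ((2*π*((k:ℝ)+1) - θ)^(2*p+1))⁻¹ := by
  have hπ0 := Real.pi_pos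
  set c := θ * Real.sin θ with hc_def
  set a := θ + 2*π*(k:ℝ) with ha_def
  set b := 2*π*((k:ℝ)+1) - θ with hb_def
  have hk0 : (0:ℝ) ≤ (k:ℝ) := Nat.cast_nonneg k
  have ha : 0 < a := by positivity
  have hb : 0 < b := by nlinarith
  have hab : a < b := by simp only [ha_def, hb_def]; nlinarith
  have hs0 : 0 < Real.sin θ := Real.sin_pos_of_pos_of_lt_pi h0 hπ
  have hc0 : 0 < c := mul_pos h0 hs0
  have hsltθ : Real.sin θ < θ := Real.sin_lt h0
  have hθa : θ ≤ a := by rw [ha_def]; nlinarith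
  have hca : c < a^2 := by nlinarith
  -- the key inequality c·a·(a+b)·a^(2p) < (a²-c)·b²·b^(2p)
  have hkey : c*a*(a+b)*a^(2*p) < (a^2-c)*b^2*b^(2*p) := by
    rcases Nat.eq_zero_or_pos k with hk | hk
    · -- k = 0 : a = θ, b = 2π - θ
      subst hk
      simp only [Nat.cast_zero, mul_zero, add_zero, zero_add, mul_one] at ha_def hb_def
      obtain ⟨q, rfl⟩ : ∃ q, p = q + 1 := ⟨p - 1, (Nat.succ_pred_eq_of_pos hp).symm⟩
      have hθq : θ^(2*q) ≤ (2*π - θ)^(2*q) := by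
        apply pow_le_pow_left₀ h0.le; linarith
      have hK := lemB1_keyK h0 hπ
      have hb' : b = 2*π - θ := by rw [hb_def]
      have ha' : a = θ := by rw [ha_def]
      rw [ha', hb']
      have e1 : c*θ*(θ+(2*π-θ))*θ^(2*(q+1)) = (2*π*Real.sin θ*θ^3*θ) * θ^(2*q) := by
        rw [hc_def]; ring
      have e2 : (θ^2-c)*(2*π-θ)^2*(2*π-θ)^(2*(q+1))
          = ((θ - Real.sin θ)*(2*π-θ)^4*θ) * (2*π-θ)^(2*q) := by
        rw [hc_def]; ring
      rw [e1, e2]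
      have hco : (0:ℝ) ≤ 2*π*Real.sin θ*θ^3*θ := by positivity
      calc (2*π*Real.sin θ*θ^3*θ) * θ^(2*q)
          ≤ (2*π*Real.sin θ*θ^3*θ) * (2*π-θ)^(2*q) := mul_le_mul_of_nonneg_left hθq hco
        _ < ((θ - Real.sin θ)*(2*π-θ)^4*θ) * (2*π-θ)^(2*q) := by
            apply mul_lt_mul_of_pos_right _ (pow_pos (by linarith : (0:ℝ) < 2*π-θ) _)
            calc 2*π*Real.sin θ*θ^3*θ = (2*π*Real.sin θ*θ^3)*θ := by ring
              _ < ((θ - Real.sin θ)*(2*π-θ)^4)*θ := mul_lt_mul_of_pos_right hK h0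
              _ = (θ - Real.sin θ)*(2*π-θ)^4*θ := by ring
    · -- k ≥ 1 : a ≥ 2π
      have ha2π : 2*π ≤ a := by
        rw [ha_def]
        have : (1:ℝ) ≤ (k:ℝ) := by exact_mod_cast hk
        nlinarith
      have hcπ : c < π := by
        have h1 : Real.sin θ ≤ 1 := Real.sin_le_one θ
        nlinarith
      have hst : a^(2*p) ≤ b^(2*p) := pow_le_pow_left₀ ha.le hab.le _
      have ht0 : 0 < b^(2*p) := pow_pos hb _
      have step1 : c*a*(a+b)*a^(2*p) ≤ (c*a*(a+b))*b^(2*p) :=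
        mul_le_mul_of_nonneg_left hst (by positivity)
      have step2 : c*a*(a+b) < (a^2-c)*b^2 := by
        have hπ3 : (3:ℝ) < π := Real.pi_gt_three
        have l1 : c*a < π*b := by nlinarith
        have l2 : a+b < 2*b := by linarith
        have l3 : c*a*(a+b) < (π*b)*(2*b) :=
          mul_lt_mul'' l1 l2 (by positivity) (by linarith)
        have l4 : 2*π ≤ a^2 - c := by nlinarith
        have l5 : (2*π)*b^2 ≤ (a^2-c)*b^2 :=
          mul_le_mul_of_nonneg_right l4 (by positivity)
        nlinarith
      calc c*a*(a+b)*a^(2*p) ≤ (c*a*(a+b))*b^(2*p) := step1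
        _ < ((a^2-c)*b^2)*b^(2*p) := mul_lt_mul_of_pos_right step2 ht0
        _ = (a^2-c)*b^2*b^(2*p) := by ring
  -- now divide through
  have hA : 0 < a^(2*p+1) := pow_pos ha _
  have hB : 0 < b^(2*p+1) := pow_pos hb _
  have main := lemB1_main_ineq a b c (a^(2*p)) (b^(2*p)) ha hab
    (pow_le_pow_left₀ ha.le hab.le _) hca hkey
  have eA : a^(2*p+1) = a * a^(2*p) := by ring
  have eB : b^(2*p+1) = b * b^(2*p) := by ring
  have main' : c * (b^2*(b^(2*p+1)) - a^2*(a^(2*p+1)))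
      < a^2*b^2*(b^(2*p+1) - a^(2*p+1)) := by rw [eA, eB]; exact main
  have final := lemB1_div_step a b c (a^(2*p+1)) (b^(2*p+1)) ha hb hA hB main'
  have e3 : a^2 * a^(2*p+1) = a^(2*p+3) := by ring
  have e4 : b^2 * b^(2*p+1) = b^(2*p+3) := by ring
  rw [e3, e4] at final
  exact final

/-- Summability of the shifted power sums. -/
private lemma lemB1_summable {θ : ℝ} (h0 : 0 < θ) (hπ : θ < π) {m : ℕ} (hm : 2 ≤ m) :
    Summable (fun j : ℤ => ((θ + 2*π*(j:ℝ))^m)⁻¹) := by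
  have hπ0 := Real.pi_pos
  have hπ1 : (1:ℝ) < π := by linarith [Real.pi_gt_three]
  have base : Summable (fun n : ℕ => (((n:ℝ)+1)^m)⁻¹) := by
    have h := (Real.summable_nat_pow_inv (p := m)).mpr (by omega)
    have h2 := (summable_nat_add_iff 1).2 h
    exact h2.congr fun n => by push_cast; ring
  apply Summable.of_nat_of_neg_add_one
  · -- positive side
    apply Summable.of_nonneg_of_le (fun n => by positivity)
      (fun n => ?_) (base.mul_left (θ^m)⁻¹)
    have h1 : θ * ((n:ℝ)+1) ≤ θ + 2*π*(n:ℝ) := by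
      have : (0:ℝ) ≤ (n:ℝ) := Nat.cast_nonneg n
      nlinarith
    have h2 : (θ * ((n:ℝ)+1))^m ≤ (θ + 2*π*(n:ℝ))^m :=
      pow_le_pow_left₀ (by positivity) h1 m
    have h3 : ((θ + 2*π*(n:ℝ))^m)⁻¹ ≤ ((θ * ((n:ℝ)+1))^m)⁻¹ := by
      apply inv_anti₀ (by positivity) h2
    calc ((θ + 2*π*(n:ℝ))^m)⁻¹ ≤ ((θ * ((n:ℝ)+1))^m)⁻¹ := h3
      _ = (θ^m)⁻¹ * (((n:ℝ)+1)^m)⁻¹ := by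
          rw [mul_pow, mul_inv]
  · -- negative side
    rw [← summable_abs_iff]
    apply Summable.of_nonneg_of_le (fun n => abs_nonneg _) (fun n => ?_) base
    have hb : (0:ℝ) < 2*π*((n:ℝ)+1) - θ := by
      have : (0:ℝ) ≤ (n:ℝ) := Nat.cast_nonneg n
      nlinarith
    have e0 : θ + 2*π*((-(↑n+1) : ℤ):ℝ) = -(2*π*((n:ℝ)+1) - θ) := by push_cast; ring
    rw [e0]
    have e1 : |((-(2*π*((n:ℝ)+1) - θ))^m)⁻¹| = ((2*π*((n:ℝ)+1) - θ)^m)⁻¹ := by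
      rw [abs_inv, abs_pow, abs_neg, abs_of_pos hb]
    rw [e1]
    have h1 : (n:ℝ)+1 ≤ 2*π*((n:ℝ)+1) - θ := by
      have : (0:ℝ) ≤ (n:ℝ) := Nat.cast_nonneg n
      nlinarith
    apply inv_anti₀ (by positivity)
    exact pow_le_pow_left₀ (by positivity) h1 m

/-- Lemma B.1: for `p ≥ 1` and `θ ∈ (0,π)`,
`∑_{j∈ℤ} (θ+2πj)^{-(2p+1)} > θ·sin θ·∑_{j∈ℤ} (θ+2πj)^{-(2p+3)}`. -/
theorem lemma_B1 (p : ℕ) (hp : 1 ≤ p) (θ : ℝ) (hθ : θ ∈ Set.Ioo (0 : ℝ) Real.pi) :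
    θ * Real.sin θ * ∑' j : ℤ, ((θ + 2 * Real.pi * (j : ℝ)) ^ (2 * p + 3))⁻¹
      < ∑' j : ℤ, ((θ + 2 * Real.pi * (j : ℝ)) ^ (2 * p + 1))⁻¹ := by
  obtain ⟨h0, hπ⟩ := hθ
  set c := θ * Real.sin θ with hc_def
  set F : ℤ → ℝ := fun j => ((θ + 2*π*(j:ℝ))^(2*p+1))⁻¹ with hF_def
  set G : ℤ → ℝ := fun j => ((θ + 2*π*(j:ℝ))^(2*p+3))⁻¹ with hG_def
  have hF : Summable F := lemB1_summable h0 hπ (by omega)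
  have hG : Summable G := lemB1_summable h0 hπ (by omega)
  have hFn : Summable (fun n : ℕ => F n + F (-(n+1))) := hF.nat_add_neg_add_one
  have hGn : Summable (fun n : ℕ => G n + G (-(n+1))) := hG.nat_add_neg_add_one
  have hFe : ∑' j : ℤ, F j = ∑' n : ℕ, (F n + F (-(n+1))) :=
    (tsum_nat_add_neg_add_one hF).symm
  have hGe : ∑' j : ℤ, G j = ∑' n : ℕ, (G n + G (-(n+1))) :=
    (tsum_nat_add_neg_add_one hG).symm
  rw [hFe, hGe]
  -- reduce to positivity of a single ℕ-indexed sum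
  have key : ∀ n : ℕ, c * (G n + G (-(n+1))) < F n + F (-(n+1)) := by
    intro n
    have e1 : θ + 2*π*(((-(↑n+1)) : ℤ):ℝ) = -(2*π*((n:ℝ)+1) - θ) := by push_cast; ring
    have hodd1 : Odd (2*p+1) := ⟨p, by ring⟩
    have hodd3 : Odd (2*p+3) := ⟨p+1, by ring⟩
    have eF : F (-(n+1)) = -((2*π*((n:ℝ)+1) - θ)^(2*p+1))⁻¹ := by
      rw [hF_def]; simp only; rw [e1, hodd1.neg_pow, inv_neg]
    have eG : G (-(n+1)) = -((2*π*((n:ℝ)+1) - θ)^(2*p+3))⁻¹ := by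
      rw [hG_def]; simp only; rw [e1, hodd3.neg_pow, inv_neg]
    have eFn : F (n:ℤ) = ((θ + 2*π*(n:ℝ))^(2*p+1))⁻¹ := by
      rw [hF_def]; simp only; norm_num
    have eGn : G (n:ℤ) = ((θ + 2*π*(n:ℝ))^(2*p+3))⁻¹ := by
      rw [hG_def]; simp only; norm_num
    rw [eF, eG, eFn, eGn]
    have := lemB1_pair p hp h0 hπ n
    rw [← hc_def] at this
    linarith [this]
  have hsub : Summable (fun n : ℕ => (F n + F (-(n+1))) - c * (G n + G (-(n+1)))) :=
    hFn.sub (hGn.mul_left c)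
  have hpos : 0 < ∑' n : ℕ, ((F n + F (-(n+1))) - c * (G n + G (-(n+1)))) := by
    apply Summable.tsum_pos hsub (fun n => by linarith [key n]) 0
    linarith [key 0]
  have heq : ∑' n : ℕ, ((F n + F (-(n+1))) - c * (G n + G (-(n+1))))
      = (∑' n : ℕ, (F n + F (-(n+1)))) - c * (∑' n : ℕ, (G n + G (-(n+1)))) := by
    rw [Summable.tsum_sub hFn (hGn.mul_left c), tsum_mul_left]
  linarith [heq ▸ hpos]
end

section
/- For every integer p ≥ 1 there exists ρ̃ > 0 such that for every ρ > ρ̃ and every θ ∈ [−π,π] with θ ≠ 0, one has ρ·M_p(θ)² − C_p(θ)² > 0. -/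
/-- For `|θ| ≤ π` and `j ≠ 0`, `π|j| ≤ |θ + 2πj|`. -/
lemma aux_abs_lower (θ : ℝ) (hθ : |θ| ≤ Real.pi) {j : ℤ} (hj : j ≠ 0) :
    Real.pi * |(j : ℝ)| ≤ |θ + 2 * Real.pi * j| := by
  have h1 : (1 : ℝ) ≤ |(j : ℝ)| := by
    have := Int.one_le_abs hj
    calc (1:ℝ) ≤ ((|j| : ℤ) : ℝ) := by exact_mod_cast this
    _ = |(j:ℝ)| := by push_cast; rfl
  have h2 : |2 * Real.pi * (j : ℝ)| ≤ |θ + 2 * Real.pi * j| + |θ| := by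
    calc |2 * Real.pi * (j : ℝ)| = |(θ + 2 * Real.pi * j) + (-θ)| := by ring_nf
    _ ≤ |θ + 2 * Real.pi * j| + |(-θ)| := abs_add_le _ _
    _ = |θ + 2 * Real.pi * j| + |θ| := by rw [abs_neg]
  have h3 : |2 * Real.pi * (j : ℝ)| = 2 * Real.pi * |(j : ℝ)| := by
    rw [abs_mul, abs_of_pos (by positivity : (0:ℝ) < 2 * Real.pi)]
  nlinarith [Real.pi_pos]

/-- Summability of `∑ 1/(j:ℝ)^2` over `ℤ` restated with inverses. -/
lemma aux_summable_inv_sq : Summable (fun j : ℤ => (((j : ℝ)) ^ 2)⁻¹) := by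
  have := (Real.summable_one_div_int_pow (p := 2)).mpr one_lt_two
  exact this.congr fun j => by rw [one_div]

/-- Proposition 4.5 (analytic content): for every `p ≥ 1` there is `ρ̃ > 0` such
that for every `ρ > ρ̃` and every `θ ∈ [-π,π]`, `θ ≠ 0`, one has
`ρ·M_p(θ)² - C_p(θ)² > 0`. -/
theorem Wp_pos_for_large_rho (p : ℕ) (hp : 1 ≤ p) :
    ∃ ρtilde : ℝ, 0 < ρtilde ∧
      ∀ ρ : ℝ, ρtilde < ρ →
        ∀ θ ∈ Set.Icc (-Real.pi) Real.pi, θ ≠ 0 →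
          0 < ρ * Mp p θ ^ 2 - Cp p θ ^ 2 := by
  -- the summable majorant (independent of θ)
  set g : ℤ → ℝ := fun j =>
      (if j = 0 then Real.pi else 0) + Real.pi ^ (2 * p - 1) * (((j : ℝ)) ^ 2)⁻¹ with hg_def
  have hg_sum : Summable g := by
    apply Summable.add
    · apply summable_of_ne_finset_zero (s := {0})
      intro j hj
      simp only [Finset.mem_singleton] at hj
      simp [hj]
    · exact aux_summable_inv_sq.mul_left _
  have hg_nonneg : ∀ j, 0 ≤ g j := by
    intro j
    have : (0:ℝ) ≤ (if j = 0 then Real.pi else 0) := by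
      split <;> simp [Real.pi_pos.le]
    positivity
  set K : ℝ := ∑' j, g j with hK_def
  have hK_nonneg : 0 ≤ K := tsum_nonneg hg_nonneg
  refine ⟨K ^ 2 + 1, by positivity, ?_⟩
  intro ρ hρ θ hθIcc hθ0
  obtain ⟨hθl, hθr⟩ := hθIcc
  have hθabs : |θ| ≤ Real.pi := abs_le.mpr ⟨hθl, hθr⟩
  have hθabs_pos : 0 < |θ| := abs_pos.mpr hθ0
  set x : ℤ → ℝ := fun j => θ + 2 * Real.pi * j with hx_def
  -- positivity of θ^(2p+2)
  have hθpow_eq : θ ^ (2 * p + 2) = |θ| ^ (2 * p + 2) := by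
    rw [← abs_pow, abs_of_nonneg]
    have : θ ^ (2 * p + 2) = (θ ^ (p + 1)) ^ 2 := by
      rw [← pow_mul]; ring_nf
    rw [this]; positivity
  have hθpow_pos : 0 < θ ^ (2 * p + 2) := by
    rw [hθpow_eq]; positivity
  set c : ℝ := (θ ^ (2 * p + 2))⁻¹ with hc_def
  have hc_pos : 0 < c := by positivity
  -- key termwise bound for the odd sum
  have hb1 : ∀ j : ℤ, ‖((x j) ^ (2 * p + 1))⁻¹‖ ≤ g j * c := by
    intro j
    rcases eq_or_ne j 0 with rfl | hj
    · have hx0 : x 0 = θ := by simp [hx_def]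
      rw [hx0]
      simp only [hg_def, if_pos rfl, Int.cast_zero]
      rw [show ((0:ℝ) ^ 2)⁻¹ = 0 by norm_num, mul_zero, add_zero]
      rw [Real.norm_eq_abs, abs_inv, ← pow_abs]
      have key : (|θ| ^ (2 * p + 1))⁻¹ = |θ| * c := by
        rw [hc_def, hθpow_eq, show 2 * p + 2 = (2 * p + 1) + 1 from rfl, pow_succ]
        field_simp
        ring
      rw [key]
      exact mul_le_mul_of_nonneg_right hθabs hc_pos.le
    · have hA : Real.pi * |(j : ℝ)| ≤ |x j| := aux_abs_lower θ hθabs hj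
      have hj1 : (1 : ℝ) ≤ |(j : ℝ)| := by
        have := Int.one_le_abs hj
        calc (1:ℝ) ≤ ((|j| : ℤ) : ℝ) := by exact_mod_cast this
        _ = |(j:ℝ)| := by push_cast; rfl
      have hπ1 : (1 : ℝ) ≤ Real.pi := by linarith [Real.pi_gt_three]
      have hpij : (1 : ℝ) ≤ Real.pi * |(j : ℝ)| := by nlinarith
      have step1 : ‖((x j) ^ (2 * p + 1))⁻¹‖ ≤ ((Real.pi * |(j : ℝ)|) ^ (2 * p + 1))⁻¹ := by
        rw [Real.norm_eq_abs, abs_inv, ← pow_abs]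
        apply inv_anti₀ (by positivity)
        exact pow_le_pow_left₀ (by positivity) hA _
      have step2 : ((Real.pi * |(j : ℝ)|) ^ (2 * p + 1))⁻¹ ≤ ((Real.pi * |(j : ℝ)|) ^ 3)⁻¹ := by
        apply inv_anti₀ (by positivity)
        exact pow_le_pow_right₀ hpij (by omega)
      have step3 : ((Real.pi * |(j : ℝ)|) ^ 3)⁻¹ ≤ (Real.pi ^ 3)⁻¹ * (((j : ℝ)) ^ 2)⁻¹ := by
        rw [mul_pow, mul_inv]
        apply mul_le_mul_of_nonneg_left _ (by positivity)
        apply inv_anti₀ (by positivity)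
        calc (j:ℝ) ^ 2 = |(j:ℝ)| ^ 2 * 1 := by rw [sq_abs]; ring
        _ ≤ |(j:ℝ)| ^ 2 * |(j:ℝ)| := by
            apply mul_le_mul_of_nonneg_left hj1 (by positivity)
        _ = |(j:ℝ)| ^ 3 := by ring
      have step4 : (Real.pi ^ 3)⁻¹ * (((j : ℝ)) ^ 2)⁻¹ ≤ g j * c := by
        have hgj : g j = Real.pi ^ (2 * p - 1) * (((j : ℝ)) ^ 2)⁻¹ := by
          simp [hg_def, hj]
        rw [hgj]
        have hcge : (Real.pi ^ (2 * p + 2))⁻¹ ≤ c := by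
          rw [hc_def, hθpow_eq]
          apply inv_anti₀ (by positivity)
          exact pow_le_pow_left₀ hθabs_pos.le hθabs _
        have hpoweq : Real.pi ^ (2 * p - 1) * (Real.pi ^ (2 * p + 2))⁻¹ = (Real.pi ^ 3)⁻¹ := by
          rw [show 2 * p + 2 = (2 * p - 1) + 3 by omega, pow_add, mul_inv]
          rw [← mul_assoc, mul_inv_cancel₀ (by positivity), one_mul]
        calc (Real.pi ^ 3)⁻¹ * (((j : ℝ)) ^ 2)⁻¹
            = Real.pi ^ (2 * p - 1) * (Real.pi ^ (2 * p + 2))⁻¹ * (((j : ℝ)) ^ 2)⁻¹ := by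
              rw [hpoweq]
          _ = Real.pi ^ (2 * p - 1) * (((j : ℝ)) ^ 2)⁻¹ * (Real.pi ^ (2 * p + 2))⁻¹ := by ring
          _ ≤ Real.pi ^ (2 * p - 1) * (((j : ℝ)) ^ 2)⁻¹ * c := by
              apply mul_le_mul_of_nonneg_left hcge (by positivity)
      linarith
  -- summability of the norms of the odd sum, and hence of the odd sum itself
  have hgc_sum : Summable (fun j : ℤ => g j * c) := hg_sum.mul_right c
  have hsum1 : Summable (fun j : ℤ => ‖((x j) ^ (2 * p + 1))⁻¹‖) :=
    Summable.of_nonneg_of_le (fun j => norm_nonneg _) hb1 hgc_sum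
  have hsum1' : Summable (fun j : ℤ => ((x j) ^ (2 * p + 1))⁻¹) :=
    hsum1.of_norm
  -- the odd tsum T and its bound
  set T : ℝ := ∑' j : ℤ, ((x j) ^ (2 * p + 1))⁻¹ with hT_def
  have hT_bound : |T| ≤ K * c := by
    calc |T| = ‖T‖ := (Real.norm_eq_abs T).symm
    _ ≤ ∑' j : ℤ, ‖((x j) ^ (2 * p + 1))⁻¹‖ := norm_tsum_le_tsum_norm hsum1
    _ ≤ ∑' j : ℤ, g j * c := Summable.tsum_le_tsum hb1 hsum1 hgc_sum
    _ = K * c := by rw [tsum_mul_right]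
  -- the even sum S : summable and bounded below by c
  have hb2 : ∀ j : ℤ, 0 ≤ ((x j) ^ (2 * p + 2))⁻¹ := by
    intro j
    have : (x j) ^ (2 * p + 2) = ((x j) ^ (p + 1)) ^ 2 := by
      rw [← pow_mul]; ring_nf
    rw [this]; positivity
  have hsum2 : Summable (fun j : ℤ => ((x j) ^ (2 * p + 2))⁻¹) := by
    apply Summable.of_norm_bounded_eventually (g := fun j : ℤ => (Real.pi ^ 2)⁻¹ * (((j : ℝ)) ^ 2)⁻¹)
      (aux_summable_inv_sq.mul_left _)
    rw [Filter.eventually_cofinite]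
    apply Set.Finite.subset (Set.finite_singleton (0 : ℤ))
    intro j hj
    simp only [Set.mem_setOf_eq, not_le] at hj
    by_contra hj0
    simp only [Set.mem_singleton_iff] at hj0
    have hA : Real.pi * |(j : ℝ)| ≤ |x j| := aux_abs_lower θ hθabs hj0
    have hj1 : (1 : ℝ) ≤ |(j : ℝ)| := by
      have := Int.one_le_abs hj0
      calc (1:ℝ) ≤ ((|j| : ℤ) : ℝ) := by exact_mod_cast this
      _ = |(j:ℝ)| := by push_cast; rfl
    have hπ1 : (1 : ℝ) ≤ Real.pi := by linarith [Real.pi_gt_three]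
    have hpij : (1 : ℝ) ≤ Real.pi * |(j : ℝ)| := by nlinarith
    have step1 : ‖((x j) ^ (2 * p + 2))⁻¹‖ ≤ ((Real.pi * |(j : ℝ)|) ^ (2 * p + 2))⁻¹ := by
      rw [Real.norm_eq_abs, abs_inv, ← pow_abs]
      apply inv_anti₀ (by positivity)
      exact pow_le_pow_left₀ (by positivity) hA _
    have step2 : ((Real.pi * |(j : ℝ)|) ^ (2 * p + 2))⁻¹ ≤ ((Real.pi * |(j : ℝ)|) ^ 2)⁻¹ := by
      apply inv_anti₀ (by positivity)
      exact pow_le_pow_right₀ hpij (by omega)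
    have step3 : ((Real.pi * |(j : ℝ)|) ^ 2)⁻¹ ≤ (Real.pi ^ 2)⁻¹ * (((j : ℝ)) ^ 2)⁻¹ := by
      rw [mul_pow, mul_inv, ← sq_abs (j:ℝ)]
    linarith
  set S : ℝ := ∑' j : ℤ, ((x j) ^ (2 * p + 2))⁻¹ with hS_def
  have hcS : c ≤ S := by
    have h0 : ((x 0) ^ (2 * p + 2))⁻¹ = c := by
      simp [hx_def, hc_def]
    calc c = ((x 0) ^ (2 * p + 2))⁻¹ := h0.symm
    _ ≤ S := Summable.le_tsum hsum2 0 fun j _ => hb2 j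
  have hS_pos : 0 < S := lt_of_lt_of_le hc_pos hcS
  have hTS : |T| ≤ K * S := hT_bound.trans (mul_le_mul_of_nonneg_left hcS hK_nonneg)
  -- positivity of the common factor
  have hcos : Real.cos θ < 1 := by
    rcases lt_or_eq_of_le (Real.cos_le_one θ) with h | h
    · exact h
    · exfalso
      have h2π : Real.pi < 2 * Real.pi := by linarith [Real.pi_pos]
      have := (Real.cos_eq_one_iff_of_lt_of_lt (x := θ) (by linarith) (by linarith)).mp h
      exact hθ0 this
  have hF_pos : 0 < (2 - 2 * Real.cos θ) ^ (p + 1) := by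
    apply pow_pos; linarith
  set F : ℝ := (2 - 2 * Real.cos θ) ^ (p + 1) with hF_def
  -- unfold Mp and Cp
  have hMp : Mp p θ = F * S := rfl
  have hCp : Cp p θ = -F * T := rfl
  rw [hMp, hCp]
  have hT2 : T ^ 2 ≤ K ^ 2 * S ^ 2 := by
    have h1 : |T| * |T| ≤ (K * S) * (K * S) :=
      mul_self_le_mul_self (abs_nonneg T) hTS
    have h2 : |T| * |T| = T ^ 2 := by rw [← abs_mul, abs_mul_self]; ring
    nlinarith
  have hρK : K ^ 2 + 1 < ρ := hρ
  have key : 0 < ρ * S ^ 2 - T ^ 2 := by nlinarith [sq_nonneg S, hS_pos]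
  calc (0:ℝ) < F ^ 2 * (ρ * S ^ 2 - T ^ 2) := by positivity
  _ = ρ * (F * S) ^ 2 - (-F * T) ^ 2 := by ring
end
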